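/- arXiv:2006.11315 — 8 statements merged into one kernel-verified Lean document; each statement's English description precedes it below -/
import Mathlib

section
/- If a group G has exactly four subgroups, then G is isomorphic to Z_{pq} for distinct primes p and q, or to Z_{p^3} for a prime p. -/
/-!
Every element of a group with finitely many subgroups has finite order (for `g` of infinite
order the subgroups `⟨g ^ n⟩`, `n : ℕ`, are pairwise distinct), so such a group is a finite
union of finite cyclic subgroups, hence finite. A group is never the union of two proper
subgroups; if `G` has only two subgroups besides `⊥` and `⊤`, some `⟨g⟩` must therefore be all
of `G`. A cyclic group of order `n` has exactly one subgroup of each order `d ∣ n`, so `n` has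
four divisors, which forces `n = p * q` or `n = p ^ 3`.
-/

open Subgroup

section Group

variable {G : Type*} [Group G]

theorem dvd_of_pow_mem_zpowers_pow {g : G} (hg : ¬IsOfFinOrder g) {a b : ℕ}
    (h : g ^ a ∈ zpowers (g ^ b)) : b ∣ a := by
  obtain ⟨k, hk⟩ := mem_zpowers_iff.mp h
  rw [← zpow_natCast, ← zpow_natCast, ← zpow_mul] at hk
  exact Int.natCast_dvd_natCast.mp ⟨k, (injective_zpow_iff_not_isOfFinOrder.mpr hg hk).symm⟩

theorem isOfFinOrder_of_finite_subgroup [Finite (Subgroup G)] (g : G) : IsOfFinOrder g := by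
  by_contra hg
  have hinj : Function.Injective fun n : ℕ => zpowers (g ^ n) :=
    fun a b (hab : zpowers (g ^ a) = zpowers (g ^ b)) =>
    Nat.dvd_antisymm (dvd_of_pow_mem_zpowers_pow hg (hab ▸ mem_zpowers _))
      (dvd_of_pow_mem_zpowers_pow hg (hab ▸ mem_zpowers _))
  have := Finite.of_injective _ hinj
  exact not_finite ℕ

theorem finite_of_finite_subgroup [Finite (Subgroup G)] : Finite G := by
  refine Set.finite_univ_iff.mp <|
    ((Set.toFinite (Set.range (zpowers : G → Subgroup G))).biUnion ?_).subset
      fun g _ => Set.mem_biUnion (Set.mem_range_self g) (mem_zpowers g)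
  rintro _ ⟨g, rfl⟩
  exact (isOfFinOrder_of_finite_subgroup g).finite_zpowers

theorem Subgroup.eq_top_or_eq_top_of_forall_mem_or_mem {A B : Subgroup G}
    (h : ∀ g, g ∈ A ∨ g ∈ B) : A = ⊤ ∨ B = ⊤ := by
  by_contra! ⟨hA, hB⟩
  obtain ⟨a, ha⟩ := SetLike.exists_not_mem_of_ne_top A hA
  obtain ⟨b, hb⟩ := SetLike.exists_not_mem_of_ne_top B hB
  have haB : a ∈ B := (h a).resolve_left ha
  have hbA : b ∈ A := (h b).resolve_right hb
  rcases h (a * b) with hab | hab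
  · exact ha ((mul_mem_cancel_right hbA).mp hab)
  · exact hb ((mul_mem_cancel_left haB).mp hab)

theorem isCyclic_of_forall_ne_top_le {A B : Subgroup G} (hA : A ≠ ⊤) (hB : B ≠ ⊤)
    (h : ∀ H : Subgroup G, H ≠ ⊤ → H ≤ A ∨ H ≤ B) : IsCyclic G := by
  by_contra hnc
  have hcover (g : G) : g ∈ A ∨ g ∈ B := by
    have hg : zpowers g ≠ ⊤ := fun hg => hnc (isCyclic_iff_exists_zpowers_eq_top.mpr ⟨g, hg⟩)
    exact (h _ hg).imp (· (mem_zpowers g)) (· (mem_zpowers g))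
  exact (eq_top_or_eq_top_of_forall_mem_or_mem hcover).elim hA hB

theorem isCyclic_of_card_subgroup_eq_four (h : Nat.card (Subgroup G) = 4) : IsCyclic G := by
  classical
  have : Fintype (Subgroup G) := @Fintype.ofFinite _ (Nat.finite_of_card_ne_zero (by omega))
  have hbot : (⊥ : Subgroup G) ≠ ⊤ := fun h' => by
    have := Finite.card_le_one_iff_subsingleton.mpr (subsingleton_of_bot_eq_top h')
    omega
  obtain ⟨A, B, -, hAB⟩ : ∃ A B : Subgroup G, A ≠ B ∧ (Finset.univ.erase ⊤).erase ⊥ = {A, B} := by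
    refine Finset.card_eq_two.mp ?_
    rw [Finset.card_erase_of_mem (by simp [hbot]), Finset.card_erase_of_mem (Finset.mem_univ _),
      Finset.card_univ, ← Nat.card_eq_fintype_card, h]
  have hmem (H : Subgroup G) : H ∈ ({A, B} : Finset _) ↔ H ≠ ⊥ ∧ H ≠ ⊤ := by
    simp [← hAB]
  refine isCyclic_of_forall_ne_top_le (((hmem A).mp (by simp)).2) (((hmem B).mp (by simp)).2)
    fun H hH => ?_
  by_cases hH' : H = ⊥
  · exact Or.inl (hH' ▸ bot_le)
  · have := (hmem H).mpr ⟨hH', hH⟩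
    simp only [Finset.mem_insert, Finset.mem_singleton] at this
    exact this.imp le_of_eq le_of_eq

end Group

section Cyclic

variable {G : Type*} [Group G] [Finite G] [IsCyclic G]

theorem IsCyclic.coe_subgroup_eq_setOf_pow_card_eq_one (H : Subgroup G) :
    (H : Set G) = {x | x ^ Nat.card H = 1} := by
  classical
  have := Fintype.ofFinite G
  refine Set.eq_of_subset_of_ncard_le (fun x hx => ?_) ?_ (Set.toFinite _)
  · exact orderOf_dvd_iff_pow_eq_one.mp (H.orderOf_dvd_natCard hx)
  · calc {x : G | x ^ Nat.card H = 1}.ncard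
        = (Finset.univ.filter fun x : G => x ^ Nat.card H = 1).card := by
          rw [← Set.ncard_coe_finset]; simp
      _ ≤ Nat.card H := IsCyclic.card_pow_eq_one_le Nat.card_pos
      _ = (H : Set G).ncard := (Nat.card_coe_set_eq _).symm

theorem IsCyclic.subgroup_eq_of_card_eq {H K : Subgroup G} (h : Nat.card H = Nat.card K) :
    H = K :=
  SetLike.coe_injective <| by
    rw [coe_subgroup_eq_setOf_pow_card_eq_one, coe_subgroup_eq_setOf_pow_card_eq_one, h]

theorem IsCyclic.exists_subgroup_card_eq {d : ℕ} (hd : d ∣ Nat.card G) :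
    ∃ H : Subgroup G, Nat.card H = d := by
  obtain ⟨g, hg⟩ := IsCyclic.exists_ofOrder_eq_natCard (α := G)
  refine ⟨zpowers (g ^ (Nat.card G / d)), ?_⟩
  rw [Nat.card_zpowers, orderOf_pow, hg, Nat.gcd_eq_right (Nat.div_dvd_of_dvd hd),
    Nat.div_div_self hd Nat.card_pos.ne']

theorem IsCyclic.card_subgroup_eq_card_divisors :
    Nat.card (Subgroup G) = (Nat.card G).divisors.card := by
  let f : Subgroup G → (Nat.card G).divisors := fun H =>
    ⟨Nat.card H, Nat.mem_divisors.mpr ⟨card_subgroup_dvd_card H, Nat.card_pos.ne'⟩⟩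
  have hf : Function.Bijective f := by
    refine ⟨fun H K hHK => subgroup_eq_of_card_eq (congrArg Subtype.val hHK), fun ⟨d, hd⟩ => ?_⟩
    obtain ⟨H, hH⟩ := exists_subgroup_card_eq (Nat.dvd_of_mem_divisors hd)
    exact ⟨H, Subtype.ext hH⟩
  rw [Nat.card_eq_of_bijective f hf, Nat.card_eq_finsetCard]

end Cyclic

theorem Nat.eq_prime_mul_prime_or_eq_prime_pow_three_of_card_divisors_eq_four {n : ℕ}
    (h : n.divisors.card = 4) :
    (∃ p q : ℕ, p.Prime ∧ q.Prime ∧ p ≠ q ∧ n = p * q) ∨ (∃ p : ℕ, p.Prime ∧ n = p ^ 3) := by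
  have hn0 : n ≠ 0 := by rintro rfl; simp at h
  have hprod : ∏ p ∈ n.primeFactors, (n.factorization p + 1) = 4 := by
    rw [← Nat.card_divisors hn0, h]
  have hpos (p) (hp : p ∈ n.primeFactors) : 1 ≤ n.factorization p :=
    Nat.one_le_iff_ne_zero.mpr (Finsupp.mem_support_iff.mp (n.support_factorization ▸ hp))
  have hn := Nat.prod_primeFactors_pow_factorization hn0
  have hcard : n.primeFactors.card ≤ 2 := by
    have : 2 ^ n.primeFactors.card ≤ 2 ^ 2 :=
      (Finset.pow_card_le_prod _ _ _ fun p hp => Nat.succ_le_succ (hpos p hp)).trans_eq hprod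
    exact (Nat.pow_le_pow_iff_right (by norm_num)).mp this
  interval_cases hk : n.primeFactors.card
  · rw [Finset.card_eq_zero.mp hk, Finset.prod_empty] at hprod
    omega
  · obtain ⟨p, hp⟩ := Finset.card_eq_one.mp hk
    have hp' := Nat.prime_of_mem_primeFactors (hp ▸ Finset.mem_singleton_self p)
    rw [hp, Finset.prod_singleton] at hprod hn
    exact Or.inr ⟨p, hp', by rw [hn]; congr; omega⟩
  · obtain ⟨p, q, hpq, hs⟩ := Finset.card_eq_two.mp hk
    have hpmem : p ∈ n.primeFactors := by rw [hs]; simp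
    have hqmem : q ∈ n.primeFactors := by rw [hs]; simp
    have hp := hpos p hpmem
    have hq := hpos q hqmem
    have hp' := Nat.prime_of_mem_primeFactors hpmem
    have hq' := Nat.prime_of_mem_primeFactors hqmem
    rw [hs, Finset.prod_pair hpq] at hprod hn
    have hexp : n.factorization p = 1 ∧ n.factorization q = 1 := by constructor <;> nlinarith
    exact Or.inl ⟨p, q, hp', hq', hpq, by rw [hn, hexp.1, hexp.2, pow_one, pow_one]⟩

theorem four_subgroups (G : Type*) [Group G]
    (h : Nat.card (Subgroup G) = 4) :
    (∃ p q : ℕ, p.Prime ∧ q.Prime ∧ p ≠ q ∧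
      Nonempty (G ≃* Multiplicative (ZMod (p * q)))) ∨
    (∃ p : ℕ, p.Prime ∧ Nonempty (G ≃* Multiplicative (ZMod (p ^ 3)))) := by
  have : Finite (Subgroup G) := Nat.finite_of_card_ne_zero (by omega)
  have : Finite G := finite_of_finite_subgroup
  have hcyc : IsCyclic G := isCyclic_of_card_subgroup_eq_four h
  have e : Multiplicative (ZMod (Nat.card G)) ≃* G := zmodCyclicMulEquiv hcyc
  have hdiv : (Nat.card G).divisors.card = 4 := by
    rw [← IsCyclic.card_subgroup_eq_card_divisors, h]
  rcases Nat.eq_prime_mul_prime_or_eq_prime_pow_three_of_card_divisors_eq_four hdiv with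
    ⟨p, q, hp, hq, hpq, hn⟩ | ⟨p, hp, hn⟩
  · rw [hn] at e
    exact Or.inl ⟨p, q, hp, hq, hpq, ⟨e.symm⟩⟩
  · rw [hn] at e
    exact Or.inr ⟨p, hp, ⟨e.symm⟩⟩
end

section
/- If G has exactly four subgroups, then G is cyclic. -/
/-!
In a non-cyclic group every cyclic subgroup `zpowers x` is proper. If there are only four
subgroups, the proper ones are `⊥` and two others `H`, `K`, so `G = H ∪ K`; but a group is
never the union of two proper subgroups.
-/

namespace Subgroup

variable {G : Type*} [Group G]

theorem eq_top_or_eq_top_of_forall_mem_or_mem_s4 {H K : Subgroup G}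
    (h : ∀ x, x ∈ H ∨ x ∈ K) : H = ⊤ ∨ K = ⊤ := by
  simp only [eq_top_iff']
  by_contra! ⟨⟨a, haH⟩, ⟨b, hbK⟩⟩
  have haK : a ∈ K := (h a).resolve_left haH
  have hbH : b ∈ H := (h b).resolve_right hbK
  rcases h (a * b) with habH | habK
  · exact haH (by simpa using H.mul_mem habH (H.inv_mem hbH))
  · exact hbK (by simpa using K.mul_mem (K.inv_mem haK) habK)

end Subgroup

open Subgroup

theorem isCyclic_of_forall_ne_top_le_or_le {G : Type*} [Group G] {H K : Subgroup G}
    (hH : H ≠ ⊤) (hK : K ≠ ⊤) (h : ∀ L : Subgroup G, L ≠ ⊤ → L ≤ H ∨ L ≤ K) :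
    IsCyclic G := by
  by_contra hG
  have hproper : ∀ x : G, zpowers x ≠ ⊤ := by
    simpa [isCyclic_iff_exists_zpowers_eq_top] using hG
  have hcover : ∀ x, x ∈ H ∨ x ∈ K := fun x =>
    (h _ (hproper x)).imp (· (mem_zpowers x)) (· (mem_zpowers x))
  exact (eq_top_or_eq_top_of_forall_mem_or_mem_s4 hcover).elim hH hK

theorem four_subgroups_cyclic (G : Type*) [Group G]
    (h : Nat.card (Subgroup G) = 4) : IsCyclic G := by
  have : Finite (Subgroup G) := Nat.finite_of_card_ne_zero (by omega)
  have : Nontrivial (Subgroup G) := Finite.one_lt_card_iff_nontrivial.mp (by omega)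
  have hcompl : ({⊥, ⊤}ᶜ : Set (Subgroup G)).ncard = 2 := by
    rw [Set.ncard_compl, Set.ncard_pair bot_ne_top, h]
  obtain ⟨H, K, -, hHK⟩ := Set.ncard_eq_two.mp hcompl
  have hmem : ∀ L, L ≠ ⊥ ∧ L ≠ ⊤ ↔ L = H ∨ L = K := by
    simpa [Set.ext_iff] using hHK
  refine isCyclic_of_forall_ne_top_le_or_le ((hmem H).mpr (.inl rfl)).2
    ((hmem K).mpr (.inr rfl)).2 fun L hL => ?_
  obtain rfl | hL' := eq_or_ne L ⊥
  · exact .inl bot_le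
  · rcases (hmem L).mp ⟨hL', hL⟩ with rfl | rfl
    exacts [.inl le_rfl, .inr le_rfl]
end

section
/- Let G and H be finite groups with coprime orders. Then the number of subgroups of G × H equals the number of subgroups of G times the number of subgroups of H. -/
/-!
Raising `(g, h) ∈ G × H` to the power `|H|` kills `h` and leaves `g ^ |H|`, which generates the
same cyclic group as `g` because `|H|` is prime to the order of `g`. So every subgroup `K` of
`G × H` contains `(g, 1)` and `(1, h)` whenever it contains `(g, h)`, i.e. `K` is the product of
its two projections, and `K ↦ (π₁ K, π₂ K)` is a bijection onto pairs of subgroups.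
-/

namespace Subgroup

variable {G H : Type*} [Group G] [Group H]

theorem mem_of_pow_mem_of_coprime {K : Subgroup G} {g : G} {n : ℕ}
    (hn : n.Coprime (orderOf g)) (h : g ^ n ∈ K) : g ∈ K := by
  obtain ⟨m, hm⟩ := exists_pow_eq_self_of_coprime hn
  exact hm ▸ K.pow_mem h m

theorem map_fst_prod (A : Subgroup G) (B : Subgroup H) :
    (A.prod B).map (MonoidHom.fst G H) = A := by
  ext g
  exact ⟨fun ⟨_, hx, hg⟩ => hg ▸ hx.1, fun hg => ⟨(g, 1), ⟨hg, B.one_mem⟩, rfl⟩⟩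

theorem map_snd_prod (A : Subgroup G) (B : Subgroup H) :
    (A.prod B).map (MonoidHom.snd G H) = B := by
  ext h
  exact ⟨fun ⟨_, hx, hh⟩ => hh ▸ hx.2, fun hh => ⟨(1, h), ⟨A.one_mem, hh⟩, rfl⟩⟩

variable {K : Subgroup (G × H)} {g : G} {h : H}

theorem mk_one_mem_of_coprime (hcop : (Nat.card G).Coprime (Nat.card H))
    (hgh : (g, h) ∈ K) : (g, 1) ∈ K := by
  refine mem_of_pow_mem_of_coprime (n := Nat.card H) ?_ ?_
  · rw [Prod.orderOf_mk, orderOf_one, Nat.lcm_one_right]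
    exact (hcop.coprime_dvd_left (_root_.orderOf_dvd_natCard g)).symm
  · simpa [Prod.pow_mk, pow_card_eq_one'] using K.pow_mem hgh (Nat.card H)

theorem one_mk_mem_of_coprime (hcop : (Nat.card G).Coprime (Nat.card H))
    (hgh : (g, h) ∈ K) : (1, h) ∈ K := by
  refine mem_of_pow_mem_of_coprime (n := Nat.card G) ?_ ?_
  · rw [Prod.orderOf_mk, orderOf_one, Nat.lcm_one_left]
    exact hcop.coprime_dvd_right (_root_.orderOf_dvd_natCard h)
  · simpa [Prod.pow_mk, pow_card_eq_one'] using K.pow_mem hgh (Nat.card G)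

theorem eq_prod_map_fst_map_snd_of_coprime (hcop : (Nat.card G).Coprime (Nat.card H))
    (K : Subgroup (G × H)) :
    K = (K.map (MonoidHom.fst G H)).prod (K.map (MonoidHom.snd G H)) := by
  refine le_antisymm (le_prod_iff.2 ⟨le_rfl, le_rfl⟩) ?_
  rintro ⟨g, h⟩ ⟨⟨⟨_, h'⟩, hgh', rfl⟩, ⟨⟨g', _⟩, hg'h, rfl⟩⟩
  simpa using K.mul_mem (mk_one_mem_of_coprime hcop hgh') (one_mk_mem_of_coprime hcop hg'h)

def prodEquivOfCoprime (hcop : (Nat.card G).Coprime (Nat.card H)) :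
    Subgroup (G × H) ≃ Subgroup G × Subgroup H where
  toFun K := (K.map (MonoidHom.fst G H), K.map (MonoidHom.snd G H))
  invFun p := p.1.prod p.2
  left_inv K := (eq_prod_map_fst_map_snd_of_coprime hcop K).symm
  right_inv p := Prod.ext (map_fst_prod p.1 p.2) (map_snd_prod p.1 p.2)

end Subgroup

theorem card_subgroups_coprime_prod_general (G H : Type*) [Group G] [Group H]
    (hcop : Nat.Coprime (Nat.card G) (Nat.card H)) :
    Nat.card (Subgroup (G × H)) = Nat.card (Subgroup G) * Nat.card (Subgroup H) := by
  rw [← Nat.card_prod]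
  exact Nat.card_congr (Subgroup.prodEquivOfCoprime hcop)

theorem card_subgroups_coprime_prod (G H : Type*) [Group G] [Group H]
    [Finite G] [Finite H] (hcop : Nat.Coprime (Nat.card G) (Nat.card H)) :
    Nat.card (Subgroup (G × H)) = Nat.card (Subgroup G) * Nat.card (Subgroup H) :=
  card_subgroups_coprime_prod_general G H hcop
end

section
/- For a prime p and integers 1 ≤ a ≤ b, the number of subgroups of Z_{p^a} × Z_{p^b} equals [(b−a+1)p^{a+2} − (b−a−1)p^{a+1} − (b+a+3)p + (b+a+1)] / (p−1)^2. -/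
/-!
A subgroup `H` of `A × B` (with `B` abelian) is determined by its image `H₁` in `A`, its
intersection `K` with `B`, and the homomorphism `H₁ → B ⧸ K` sending `x` to the class of any `b`
with `(x, b) ∈ H`; conversely every such triple arises (`graphMod`). When `A` and `B` are cyclic
there are `gcd |H₁| |B ⧸ K|` such homomorphisms, and the subgroups of a cyclic group of order `n`
are the kernels of `x ↦ d • x` for `d ∣ n`, so `ZMod m × ZMod n` has `∑_{d ∣ m, e ∣ n} gcd d e`
subgroups. For `m = p ^ a`, `n = p ^ b` this is the double geometric sum
`∑_{i ≤ a, j ≤ b} p ^ min i j`.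
-/

open AddMonoidHom Finset

namespace AddSubgroup

variable {A B : Type*} [AddGroup A] [AddCommGroup B] {H₁ : AddSubgroup A} {K : AddSubgroup B}

def graphMod (φ : H₁ →+ B ⧸ K) : AddSubgroup (A × B) where
  carrier := {x | ∃ h : x.1 ∈ H₁, φ ⟨x.1, h⟩ = x.2}
  zero_mem' := ⟨H₁.zero_mem, φ.map_zero⟩
  add_mem' := by
    rintro ⟨x, b⟩ ⟨y, c⟩ ⟨hx, hb⟩ ⟨hy, hc⟩
    exact ⟨H₁.add_mem hx hy, by simp [← hb, ← hc, ← map_add]⟩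
  neg_mem' := by
    rintro ⟨x, b⟩ ⟨hx, hb⟩
    exact ⟨H₁.neg_mem hx, (φ.map_neg ⟨x, hx⟩).trans (by simp [hb])⟩

theorem mem_graphMod {φ : H₁ →+ B ⧸ K} {x : A} {b : B} :
    (x, b) ∈ graphMod φ ↔ ∃ h : x ∈ H₁, φ ⟨x, h⟩ = b :=
  Iff.rfl

theorem map_fst_graphMod (φ : H₁ →+ B ⧸ K) : (graphMod φ).map (fst A B) = H₁ := by
  ext x
  constructor
  · rintro ⟨⟨x, b⟩, ⟨hx, _⟩, rfl⟩
    exact hx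
  · intro hx
    obtain ⟨b, hb⟩ := QuotientAddGroup.mk_surjective (φ ⟨x, hx⟩)
    exact ⟨(x, b), ⟨hx, hb.symm⟩, rfl⟩

theorem comap_inr_graphMod (φ : H₁ →+ B ⧸ K) : (graphMod φ).comap (inr A B) = K := by
  ext b
  rw [mem_comap, inr_apply, mem_graphMod, ← QuotientAddGroup.eq_zero_iff b]
  exact ⟨fun ⟨_, hb⟩ ↦ hb.symm.trans φ.map_zero, fun hb ↦ ⟨H₁.zero_mem, φ.map_zero.trans hb.symm⟩⟩

theorem graphMod_injective :
    Function.Injective (graphMod : (H₁ →+ B ⧸ K) → AddSubgroup (A × B)) := by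
  intro φ ψ h
  ext ⟨x, hx⟩
  obtain ⟨b, hb⟩ := QuotientAddGroup.mk_surjective (φ ⟨x, hx⟩)
  obtain ⟨_, hψ⟩ := mem_graphMod.1 (h ▸ mem_graphMod.2 ⟨hx, hb.symm⟩ : (x, b) ∈ graphMod ψ)
  rw [hψ, hb]

theorem mk_eq_mk_of_mem {H : AddSubgroup (A × B)} {x : A} {b c : B} (hb : (x, b) ∈ H)
    (hc : (x, c) ∈ H) : (b : B ⧸ H.comap (inr A B)) = c := by
  rw [QuotientAddGroup.eq, mem_comap, inr_apply]
  simpa using H.add_mem (H.neg_mem hb) hc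

theorem exists_graphMod_eq (H : AddSubgroup (A × B)) :
    ∃ φ : H.map (fst A B) →+ B ⧸ H.comap (inr A B), graphMod φ = H := by
  have hlift (x : H.map (fst A B)) : ∃ b, ((x : A), b) ∈ H := by
    obtain ⟨⟨y, b⟩, hyb, hy⟩ := x.2
    exact ⟨b, hy ▸ hyb⟩
  choose s hs using hlift
  let φ : H.map (fst A B) →+ B ⧸ H.comap (inr A B) :=
    { toFun x := s x
      map_zero' := mk_eq_mk_of_mem (hs 0) H.zero_mem
      map_add' x y := mk_eq_mk_of_mem (hs (x + y)) (H.add_mem (hs x) (hs y)) }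
  refine ⟨φ, ?_⟩
  ext ⟨x, b⟩
  rw [mem_graphMod]
  constructor
  · rintro ⟨hx, hφ⟩
    have hdiff : (0, -s ⟨x, hx⟩ + b) ∈ H := by
      rwa [← inr_apply, ← mem_comap, ← QuotientAddGroup.eq]
    simpa using H.add_mem (hs ⟨x, hx⟩) hdiff
  · intro hxb
    exact ⟨⟨(x, b), hxb, rfl⟩, mk_eq_mk_of_mem (hs _) hxb⟩

theorem card_fiber_map_fst_comap_inr (H₁ : AddSubgroup A) (K : AddSubgroup B) :
    Nat.card {H : AddSubgroup (A × B) // H.map (fst A B) = H₁ ∧ H.comap (inr A B) = K} =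
      Nat.card (H₁ →+ B ⧸ K) := by
  refine (Nat.card_eq_of_bijective
    (fun φ ↦ ⟨graphMod φ, map_fst_graphMod φ, comap_inr_graphMod φ⟩) ⟨?_, ?_⟩).symm
  · exact fun φ ψ h ↦ graphMod_injective (congrArg Subtype.val h)
  · rintro ⟨H, rfl, rfl⟩
    obtain ⟨φ, hφ⟩ := exists_graphMod_eq H
    exact ⟨φ, Subtype.ext hφ⟩

end AddSubgroup

theorem card_addSubgroup_prod {A B : Type*} [AddGroup A] [AddCommGroup B] [Finite A] [Finite B]
    [Fintype (AddSubgroup A)] [Fintype (AddSubgroup B)] :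
    Nat.card (AddSubgroup (A × B)) =
      ∑ H₁ : AddSubgroup A, ∑ K : AddSubgroup B, Nat.card (H₁ →+ B ⧸ K) := by
  let f (H : AddSubgroup (A × B)) := (H.map (fst A B), H.comap (inr A B))
  calc Nat.card (AddSubgroup (A × B))
      = Nat.card (Σ y, {H // f H = y}) := Nat.card_congr (Equiv.sigmaFiberEquiv f).symm
    _ = ∑ y, Nat.card {H // f H = y} := Nat.card_sigma
    _ = ∑ H₁ : AddSubgroup A, ∑ K : AddSubgroup B, Nat.card (H₁ →+ B ⧸ K) := by
      rw [Fintype.sum_prod_type]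
      refine sum_congr rfl fun H₁ _ ↦ sum_congr rfl fun K _ ↦ ?_
      rw [← AddSubgroup.card_fiber_map_fst_comap_inr]
      exact Nat.card_congr (Equiv.subtypeEquivRight fun H ↦ Prod.ext_iff)

namespace IsAddCyclic

variable {G C : Type*}

theorem card_addMonoidHom [AddGroup G] [IsAddCyclic G] [AddCommGroup C] [IsAddCyclic C]
    [Finite C] : Nat.card (G →+ C) = (Nat.card G).gcd (Nat.card C) := by
  set n := Nat.card G
  let e : (G →+ C) ≃ (nsmulAddMonoidHom (α := C) n).ker :=
    (zmodAddCyclicAddEquiv ‹_›).addMonoidHomCongrLeft.toEquiv.symm.trans <|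
      (ZMod.lift n).symm.trans <| (zmultiplesHom C).symm.subtypeEquiv fun f ↦ by
        simp [AddMonoidHom.mem_ker, ← map_nsmul]
  rw [Nat.card_congr e, card_nsmulAddMonoidHom_ker, Nat.gcd_comm]

variable [AddCommGroup G] [IsAddCyclic G] [Finite G]

theorem eq_ker_nsmul_card (H : AddSubgroup G) : H = (nsmulAddMonoidHom (Nat.card H)).ker := by
  refine AddSubgroup.eq_of_le_of_card_ge (fun x hx ↦ ?_) ?_
  · exact congrArg Subtype.val (card_nsmul_eq_zero' (x := (⟨x, hx⟩ : H)))
  · rw [card_nsmulAddMonoidHom_ker, Nat.gcd_eq_right H.card_addSubgroup_dvd_card]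

theorem sum_addSubgroup [Fintype (AddSubgroup G)] {M : Type*} [AddCommMonoid M] (f : ℕ → M) :
    ∑ H : AddSubgroup G, f (Nat.card H) = ∑ d ∈ (Nat.card G).divisors, f d := by
  refine sum_nbij' (fun H ↦ Nat.card H) (fun d ↦ (nsmulAddMonoidHom d).ker)
    (fun H _ ↦ Nat.mem_divisors.2 ⟨H.card_addSubgroup_dvd_card, Nat.card_pos.ne'⟩)
    (fun _ _ ↦ mem_univ _) (fun H _ ↦ (eq_ker_nsmul_card H).symm) (fun d hd ↦ ?_)
    fun _ _ ↦ rfl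
  rw [card_nsmulAddMonoidHom_ker, Nat.gcd_eq_right (Nat.dvd_of_mem_divisors hd)]

end IsAddCyclic

theorem Nat.gcd_pow_pow (p i j : ℕ) : (p ^ i).gcd (p ^ j) = p ^ min i j := by
  rcases le_total i j with h | h
  · rw [Nat.gcd_eq_left (Nat.pow_dvd_pow p h), min_eq_left h]
  · rw [Nat.gcd_eq_right (Nat.pow_dvd_pow p h), min_eq_right h]

theorem card_addSubgroup_zmod_prod (m n : ℕ) [NeZero m] [NeZero n] :
    Nat.card (AddSubgroup (ZMod m × ZMod n)) = ∑ d ∈ m.divisors, ∑ e ∈ n.divisors, d.gcd e := by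
  have : Fintype (AddSubgroup (ZMod m)) := Fintype.ofFinite _
  have : Fintype (AddSubgroup (ZMod n)) := Fintype.ofFinite _
  have (K : AddSubgroup (ZMod n)) : IsAddCyclic (ZMod n ⧸ K) :=
    isAddCyclic_of_surjective _ (QuotientAddGroup.mk'_surjective K)
  have hcard (K : AddSubgroup (ZMod n)) : Nat.card (ZMod n ⧸ K) = n / Nat.card K := by
    rw [← K.index_eq_card]
    exact Nat.eq_div_of_mul_eq_right Nat.card_pos.ne' (by rw [K.card_mul_index, Nat.card_zmod])
  calc Nat.card (AddSubgroup (ZMod m × ZMod n))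
      = ∑ H : AddSubgroup (ZMod m), ∑ K : AddSubgroup (ZMod n),
          (Nat.card H).gcd (n / Nat.card K) := by
        simp only [card_addSubgroup_prod, IsAddCyclic.card_addMonoidHom, hcard]
    _ = ∑ H : AddSubgroup (ZMod m), ∑ e ∈ n.divisors, (Nat.card H).gcd e := by
        refine sum_congr rfl fun H _ ↦ ?_
        rw [IsAddCyclic.sum_addSubgroup fun e ↦ (Nat.card H).gcd (n / e), Nat.card_zmod,
          Nat.sum_div_divisors]
    _ = ∑ d ∈ m.divisors, ∑ e ∈ n.divisors, d.gcd e := by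
        rw [IsAddCyclic.sum_addSubgroup fun d ↦ ∑ e ∈ n.divisors, d.gcd e, Nat.card_zmod]

section

variable {R : Type*} [CommRing R]

theorem sum_range_pow_min (q : R) {i b : ℕ} (hib : i ≤ b) :
    ∑ j ∈ range (b + 1), q ^ min i j = ∑ j ∈ range i, q ^ j + ((b : R) + 1 - i) * q ^ i := by
  rw [range_eq_Ico, ← sum_Ico_consecutive _ i.zero_le (by omega : i ≤ b + 1), ← range_eq_Ico]
  congr 1
  · exact sum_congr rfl fun j hj ↦ by rw [min_eq_right (mem_range.1 hj).le]
  · rw [sum_congr rfl fun j hj ↦ by rw [min_eq_left (mem_Ico.1 hj).1], sum_const, Nat.card_Ico,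
      nsmul_eq_mul, Nat.cast_sub (by omega)]
    push_cast
    ring

theorem sum_range_sum_range_pow_min_mul_sub_one_sq (q : R) {a b : ℕ} (hab : a ≤ b) :
    (∑ i ∈ range (a + 1), ∑ j ∈ range (b + 1), q ^ min i j) * (q - 1) ^ 2 =
      ((b : R) - a + 1) * q ^ (a + 2) - ((b : R) - a - 1) * q ^ (a + 1)
        - ((b : R) + a + 3) * q + ((b : R) + a + 1) := by
  induction a with
  | zero =>
    simp only [zero_add, sum_range_one, Nat.zero_min, pow_zero, sum_const, card_range, nsmul_one,
      Nat.cast_add, Nat.cast_one]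
    ring
  | succ a ih =>
    rw [sum_range_succ, add_mul, ih (by omega), sum_range_pow_min q hab]
    push_cast
    linear_combination (q - 1) * geom_sum_mul q (a + 1)

end

theorem card_subgroups_Zpa_Zpb_general (p a b : ℕ) (hp : p.Prime) (hab : a ≤ b) :
    (Nat.card (Subgroup (Multiplicative (ZMod (p ^ a) × ZMod (p ^ b)))) : ℤ) * (p - 1) ^ 2 =
      ((b : ℤ) - a + 1) * p ^ (a + 2) - ((b : ℤ) - a - 1) * p ^ (a + 1)
        - ((b : ℤ) + a + 3) * p + ((b : ℤ) + a + 1) := by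
  have : NeZero p := ⟨hp.ne_zero⟩
  rw [Nat.card_congr AddSubgroup.toSubgroup.toEquiv.symm, card_addSubgroup_zmod_prod,
    Nat.divisors_prime_pow hp, Nat.divisors_prime_pow hp]
  simp only [sum_map, Function.Embedding.coeFn_mk, Nat.gcd_pow_pow]
  push_cast
  exact sum_range_sum_range_pow_min_mul_sub_one_sq (p : ℤ) hab

theorem card_subgroups_Zpa_Zpb (p a b : ℕ) (hp : p.Prime) (ha : 1 ≤ a) (hab : a ≤ b) :
    (Nat.card (Subgroup (Multiplicative (ZMod (p ^ a) × ZMod (p ^ b)))) : ℤ) * (p - 1) ^ 2 =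
      ((b : ℤ) - a + 1) * p ^ (a + 2) - ((b : ℤ) - a - 1) * p ^ (a + 1)
        - ((b : ℤ) + a + 3) * p + ((b : ℤ) + a + 1) :=
  card_subgroups_Zpa_Zpb_general p a b hp hab
end

section
/- Let G be a group of order p^a for a prime p, and let 0 ≤ i ≤ a. Then the number of subgroups of G of order p^i is congruent to 1 modulo p. -/
/-!
Wielandt's argument. Let `G` act by left translation on its `p^i`-element subsets. The stabilizer
of such a subset `S` acts freely on `S`, so it has order `p^j` with `j ≤ i`, and the orbit of `S`
has length `p^(a-j)`. Moreover `j = i` exactly when `S` is a left coset of a subgroup of order `p^i`,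
and the left cosets of the `N` subgroups of order `p^i` make up `N` orbits of length `p^(a-i)`.
Counting modulo `p^(a-i+1)` gives `(p^a).choose (p^i) ≡ N * p^(a-i)`. The left-hand side depends
only on `|G|`, and the cyclic group of order `p^a` has exactly one subgroup of order `p^i`; comparing
the two congruences gives `N ≡ 1 [MOD p]`.
-/

open MulAction
open scoped Pointwise

namespace MulAction

variable {G X : Type*} [Group G] [MulAction G X]

theorem dvd_card_of_dvd_ncard_orbit [Finite X] {m : ℕ} (h : ∀ x : X, m ∣ (orbit G x).ncard) :
    m ∣ Nat.card X := by
  have := Fintype.ofFinite (orbitRel.Quotient G X)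
  rw [Nat.card_congr (selfEquivSigmaOrbits G X), Nat.card_sigma]
  exact Finset.dvd_sum fun ω _ => Nat.card_coe_set_eq (orbit G ω.out) ▸ h ω.out

theorem dvd_card_subtype_dvd_ncard_orbit [Finite X] (m : ℕ) :
    m ∣ Nat.card {x : X // m ∣ (orbit G x).ncard} := by
  let Y : SubMulAction G X :=
    { carrier := {x | m ∣ (orbit G x).ncard}
      smul_mem' := fun g x hx => by simpa [orbit_smul] using hx }
  refine dvd_card_of_dvd_ncard_orbit (G := G) (X := Y) fun y => ?_
  rw [← index_stabilizer, SubMulAction.stabilizer_of_subMul, index_stabilizer]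
  exact y.2

theorem card_stabilizer_smul (g : G) (x : X) :
    Nat.card (stabilizer G (g • x)) = Nat.card (stabilizer G x) := by
  rw [stabilizer_smul_eq_stabilizer_map_conj,
    Subgroup.card_map_of_injective (MulAut.conj g).injective]

end MulAction

section LeftTranslation

variable {G : Type*} [Group G]

theorem card_stabilizer_dvd_ncard (S : Set G) [Finite S] :
    Nat.card (stabilizer G S) ∣ S.ncard := by
  let Y : SubMulAction (stabilizer G S) G :=
    { carrier := S
      smul_mem' := fun h x hx => by
        simpa only [mem_stabilizer_iff.1 h.2, ← Subgroup.smul_def] using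
          Set.smul_mem_smul_set (a := (h : G)) hx }
  rw [← Nat.card_coe_set_eq]
  refine dvd_card_of_dvd_ncard_orbit (G := stabilizer G S) (X := Y) fun y => ?_
  have hfree : stabilizer (stabilizer G S) (y : G) = ⊥ := by
    ext h
    simp
  rw [← index_stabilizer, SubMulAction.stabilizer_of_subMul, hfree, Subgroup.index_bot]

variable (G) in
def subsetsOfNcard (k : ℕ) : SubMulAction G (Set G) where
  carrier := {S | S.ncard = k}
  smul_mem' g S (hS : S.ncard = k) := (Set.ncard_smul_set g S).trans hS

theorem card_subsetsOfNcard [Finite G] (k : ℕ) :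
    Nat.card (subsetsOfNcard G k) = (Nat.card G).choose k := by
  have := Fintype.ofFinite G
  classical
  rw [Nat.card_eq_fintype_card (α := G), ← Fintype.card_finset_len, ← Nat.card_eq_fintype_card]
  refine Nat.card_congr (Equiv.subtypeEquiv Fintype.finsetEquivSet fun S => ?_).symm
  change S.card = k ↔ (S : Set G).ncard = k
  rw [Set.ncard_coe_finset]

theorem Subgroup.eq_of_coe_mem_orbit {K K' : Subgroup G}
    (h : (K' : Set G) ∈ orbit G (K : Set G)) : K' = K := by
  obtain ⟨g, hg : g • (K : Set G) = K'⟩ := h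
  obtain ⟨x, hx, hgx : g * x = 1⟩ : (1 : G) ∈ g • (K : Set G) := hg ▸ K'.one_mem
  have hgK : g ∈ K := eq_inv_of_mul_eq_one_left hgx ▸ K.inv_mem hx
  have hfix : g • (K : Set G) = K := by
    rw [← mem_stabilizer_iff, stabilizer_subgroup]
    exact hgK
  exact SetLike.coe_injective (hg.symm.trans hfix)

theorem exists_subgroup_mem_orbit_iff [Finite G] {S : Set G} {k : ℕ} :
    (∃ K : Subgroup G, Nat.card K = k ∧ S ∈ orbit G (K : Set G)) ↔
      S.ncard = k ∧ Nat.card (stabilizer G S) = k := by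
  constructor
  · rintro ⟨K, rfl, g, rfl⟩
    refine ⟨(Set.ncard_smul_set g _).trans (Nat.card_coe_set_eq _).symm, ?_⟩
    rw [card_stabilizer_smul, stabilizer_subgroup]
  · rintro ⟨hS, hstab⟩
    obtain ⟨s, hs⟩ : S.Nonempty := by
      rw [← Set.ncard_pos, hS, ← hstab]
      exact Nat.card_pos
    set T := s⁻¹ • S
    have h1T : (1 : G) ∈ T := by simpa using Set.smul_mem_smul_set (a := s⁻¹) hs
    have hstab_sub : (stabilizer G T : Set G) ⊆ T := fun h hh => by
      simpa [mem_stabilizer_iff.1 hh] using Set.smul_mem_smul_set (a := h) h1T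
    have hstab_eq : (stabilizer G T : Set G) = T := by
      refine Set.eq_of_subset_of_ncard_le hstab_sub ?_
      rw [Set.ncard_smul_set, hS, ← Nat.card_coe_set_eq, SetLike.coe_sort_coe,
        card_stabilizer_smul, hstab]
    refine ⟨stabilizer G T, by rw [card_stabilizer_smul, hstab], s, ?_⟩
    change s • (stabilizer G T : Set G) = S
    rw [hstab_eq, smul_inv_smul]

theorem card_cosets_of_subgroups_of_card [Finite G] (k : ℕ) :
    Nat.card {S : Set G // ∃ K : Subgroup G, Nat.card K = k ∧ S ∈ orbit G (K : Set G)} =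
      Nat.card {K : Subgroup G // Nat.card K = k} * (Nat.card G / k) := by
  have := Fintype.ofFinite {K : Subgroup G // Nat.card K = k}
  let f : (Σ K : {K : Subgroup G // Nat.card K = k}, orbit G (K : Set G)) →
      {S : Set G // ∃ K : Subgroup G, Nat.card K = k ∧ S ∈ orbit G (K : Set G)} :=
    fun ⟨K, S⟩ => ⟨S, K, K.2, S.2⟩
  have hf : f.Bijective := by
    refine ⟨fun ⟨K, S⟩ ⟨K', S'⟩ h => ?_, fun ⟨S, K, hK, hS⟩ => ⟨⟨⟨K, hK⟩, S, hS⟩, rfl⟩⟩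
    have hSS' : (S : Set G) = S' := congrArg Subtype.val h
    have hKK' : K = K' := by
      refine Subtype.ext (Subgroup.eq_of_coe_mem_orbit (orbit_eq_iff.1 ?_))
      rw [← orbit_eq_iff.2 S.2, hSS', orbit_eq_iff.2 S'.2]
    exact Sigma.subtype_ext hKK' hSS'
  have hindex (K : {K : Subgroup G // Nat.card K = k}) :
      Nat.card (orbit G (K : Set G)) = Nat.card G / k := by
    rw [Nat.card_coe_set_eq, ← index_stabilizer, stabilizer_subgroup, ← K.1.card_mul_index, K.2,
      Nat.mul_div_cancel_left _ (K.2 ▸ Nat.card_pos)]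
  rw [← Nat.card_eq_of_bijective f hf, Nat.card_sigma, Finset.sum_congr rfl fun K _ => hindex K,
    Finset.sum_const, Finset.card_univ, Fintype.card_eq_nat_card, smul_eq_mul]

theorem choose_modEq_card_subgroups_mul {p a i : ℕ} (hp : p.Prime) (hcard : Nat.card G = p ^ a)
    (hi : i ≤ a) :
    (p ^ a).choose (p ^ i) ≡
      Nat.card {H : Subgroup G // Nat.card H = p ^ i} * p ^ (a - i) [MOD p ^ (a - i + 1)] := by
  have : Finite G := Nat.finite_of_card_ne_zero (hcard ▸ (pow_pos hp.pos a).ne')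
  let IsCoset (S : subsetsOfNcard G (p ^ i)) : Prop :=
    Nat.card (stabilizer G (S : Set G)) = p ^ i
  have hcosets : Nat.card {S // IsCoset S} =
      Nat.card {H : Subgroup G // Nat.card H = p ^ i} * p ^ (a - i) := by
    rw [← Nat.pow_div hi hp.pos, ← hcard, ← card_cosets_of_subgroups_of_card]
    exact Nat.card_congr <| (Equiv.subtypeSubtypeEquivSubtypeInter _ _).trans <|
      Equiv.subtypeEquivRight fun S => exists_subgroup_mem_orbit_iff.symm
  have hnot_coset (S : subsetsOfNcard G (p ^ i)) :
      ¬IsCoset S ↔ p ^ (a - i + 1) ∣ (orbit G S).ncard := by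
    obtain ⟨j, hj, hstab⟩ :=
      (Nat.dvd_prime_pow hp).1 (S.2 ▸ card_stabilizer_dvd_ncard (S : Set G))
    have horbit : (orbit G S).ncard = p ^ (a - j) := by
      rw [← index_stabilizer, SubMulAction.stabilizer_of_subMul,
        ← Nat.pow_div (hj.trans hi) hp.pos, ← hcard, ← hstab, ← Subgroup.card_mul_index,
        Nat.mul_div_cancel_left _ Nat.card_pos]
    change ¬Nat.card (stabilizer G (S : Set G)) = p ^ i ↔ _
    rw [horbit, Nat.pow_dvd_pow_iff_le_right hp.one_lt, hstab,
      (Nat.pow_right_injective hp.two_le).eq_iff]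
    omega
  have hrest : Nat.card {S // ¬IsCoset S} ≡ 0 [MOD p ^ (a - i + 1)] := by
    rw [Nat.modEq_zero_iff_dvd, Nat.card_congr (Equiv.subtypeEquivRight hnot_coset)]
    exact dvd_card_subtype_dvd_ncard_orbit _
  calc (p ^ a).choose (p ^ i)
      = Nat.card {S // IsCoset S} + Nat.card {S // ¬IsCoset S} := by
        rw [← Nat.card_sum, Nat.card_congr (Equiv.sumCompl IsCoset), card_subsetsOfNcard, hcard]
    _ ≡ Nat.card {S // IsCoset S} + 0 [MOD p ^ (a - i + 1)] := hrest.add_left _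
    _ = _ := by rw [add_zero, hcosets]

end LeftTranslation

theorem IsCyclic.card_subgroups_of_card_eq_one {C : Type*} [CommGroup C] [IsCyclic C] [Finite C]
    {d : ℕ} (hd : d ∣ Nat.card C) : Nat.card {H : Subgroup C // Nat.card H = d} = 1 := by
  let K := (powMonoidHom d : C →* C).ker
  have hK : Nat.card K = d := by rw [IsCyclic.card_powMonoidHom_ker, Nat.gcd_eq_right hd]
  have heq (H : {H : Subgroup C // Nat.card H = d}) : H.1 = K := by
    refine Subgroup.eq_of_le_of_card_ge (fun x hx => ?_) (by rw [hK, H.2])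
    exact orderOf_dvd_iff_pow_eq_one.1 (H.2 ▸ H.1.orderOf_dvd_natCard hx)
  exact Nat.card_eq_one_iff_unique.2
    ⟨⟨fun H H' => Subtype.ext ((heq H).trans (heq H').symm)⟩, ⟨⟨K, hK⟩⟩⟩

theorem wielandt_subgroup_count (G : Type*) [Group G] (p a i : ℕ) (hp : p.Prime)
    (hcard : Nat.card G = p ^ a) (hi : i ≤ a) :
    Nat.card {H : Subgroup G // Nat.card H = p ^ i} ≡ 1 [MOD p] := by
  have : NeZero (p ^ a) := ⟨(pow_pos hp.pos a).ne'⟩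
  have hcyc : Nat.card (Multiplicative (ZMod (p ^ a))) = p ^ a := by simp
  have hG := choose_modEq_card_subgroups_mul hp hcard hi
  have hC := choose_modEq_card_subgroups_mul hp hcyc hi
  rw [IsCyclic.card_subgroups_of_card_eq_one (hcyc.symm ▸ pow_dvd_pow p hi), one_mul] at hC
  refine Nat.ModEq.mul_right_cancel' (pow_ne_zero (a - i) hp.ne_zero) ?_
  rw [one_mul, ← pow_succ']
  exact hG.symm.trans hC
end

section
/- Let G be a non-cyclic group of order 2^a with a ≥ 4. Then the number of subgroups of G is at least 3a − 1. -/
/-!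
Count subgroups by their order `2 ^ k`: there is one of order `1` and one of order `2 ^ a`.

A non-cyclic group of order `p ^ (m + 1)` has at least three subgroups of order `p ^ m`: every
element lies in one, and a group is never the union of two proper subgroups. A non-cyclic group of
order `2 ^ (m + 2)`, `m ≥ 2`, has a non-cyclic subgroup of index `2`: otherwise every element lies
in a cyclic subgroup of index `2`, which contains all squares, so squares are central; then for
`y` outside a cyclic maximal subgroup `⟨m⟩` we may write `y ^ 2 = p ^ 2` with `p ∈ ⟨m⟩`, and
`y * p⁻¹` has order dividing `4`; lying in a cyclic group of order at least `8`, it is a square,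
hence lies in `⟨m⟩`, and so does `y`. Descending, `G` has non-cyclic subgroups of every order
`2 ^ j` with `3 ≤ j ≤ a`, hence at least three subgroups of each order `2 ^ k`, `2 ≤ k < a`.

It remains to find six subgroups of order `2` or `4`. Two involutions yield a third, hence three
subgroups of order `2`, besides the three of order `4`. If `z` is the only involution, a
non-cyclic subgroup `K` of order `8` is a quaternion group, with three subgroups of order `4`; an
element outside `K` normalising `K` produces two elements `x`, `y` outside `K` with
`x ^ 2 = y ^ 2 = z` and `⟨x⟩ ≠ ⟨y⟩`. In both cases the total is `1 + 6 + 3 (a - 3) + 1 = 3 a - 1`.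
-/

open Subgroup

namespace Subgroup

variable {G : Type*} [Group G]

theorem exists_notMem_and_notMem_of_ne_top {H K : Subgroup G} (hH : H ≠ ⊤) (hK : K ≠ ⊤) :
    ∃ g, g ∉ H ∧ g ∉ K := by
  obtain ⟨a, ha⟩ := SetLike.exists_not_mem_of_ne_top H hH
  obtain ⟨b, hb⟩ := SetLike.exists_not_mem_of_ne_top K hK
  by_cases haK : a ∈ K
  · by_cases hbH : b ∈ H
    · exact ⟨a * b, fun h => ha ((mul_mem_cancel_right hbH).mp h),
        fun h => hb ((mul_mem_cancel_left haK).mp h)⟩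
    · exact ⟨b, hbH, hb⟩
  · exact ⟨a, ha, haK⟩

theorem exists_mem_ne_ne {K : Subgroup G} (hK : 2 < Nat.card K) (a b : G) :
    ∃ g ∈ K, g ≠ a ∧ g ≠ b := by
  by_contra! h
  have hsub : (K : Set G) ⊆ {a, b} := fun g hg => or_iff_not_imp_left.mpr (h g hg)
  have := (Set.ncard_le_ncard hsub).trans (Set.ncard_insert_le a {b})
  rw [Set.ncard_singleton, ← Nat.card_coe_set_eq] at this
  simp only [SetLike.coe_sort_coe, Nat.reduceAdd] at this
  omega

theorem card_mul_relIndex {H K : Subgroup G} (h : H ≤ K) :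
    Nat.card H * H.relIndex K = Nat.card K := by
  rw [← Nat.card_congr (subgroupOfEquivOfLe h).toEquiv]
  exact card_mul_index (H.subgroupOf K)

theorem mul_mem_iff_of_relIndex_eq_two {H K : Subgroup G} (h : H.relIndex K = 2) {a b : G}
    (ha : a ∈ K) (hb : b ∈ K) : a * b ∈ H ↔ (a ∈ H ↔ b ∈ H) :=
  mul_mem_iff_of_index_two (H := H.subgroupOf K) (a := ⟨a, ha⟩) (b := ⟨b, hb⟩) h

theorem ncard_card_eq_le_map_subtype [Finite G] (H : Subgroup G) (m : ℕ) :
    {M : Subgroup H | Nat.card M = m}.ncard ≤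
      {M : Subgroup G | M ≤ H ∧ Nat.card M = m}.ncard := by
  rw [← Set.ncard_image_of_injective _ (map_injective H.subtype_injective)]
  refine Set.ncard_le_ncard ?_
  rintro _ ⟨M, hM, rfl⟩
  exact ⟨map_subtype_le M, (card_map_of_injective H.subtype_injective).trans hM⟩

end Subgroup

theorem sum_ncard_card_eq_pow_le {G : Type*} [Group G] [Finite G] {p : ℕ} (hp : 2 ≤ p)
    (s : Finset ℕ) :
    ∑ k ∈ s, {H : Subgroup G | Nat.card H = p ^ k}.ncard ≤ Nat.card (Subgroup G) := by
  rw [← finsum_mem_coe_finset, ← s.finite_toSet.ncard_biUnion (fun _ _ => Set.toFinite _)]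
  · exact Set.ncard_le_card _
  · intro i _ j _ hij
    exact Set.disjoint_left.mpr fun H hi hj => hij (Nat.pow_right_injective hp (hi.symm.trans hj))

section GroupIdentities

variable {G : Type*} [Group G]

theorem conj_eq_inv_of_mul_sq_eq_sq {a b : G} (h : (a * b) ^ 2 = a ^ 2) :
    a * b * a⁻¹ = b⁻¹ := by
  have hbab : b * (a * b) = a := by
    rw [sq, sq, mul_assoc] at h
    exact mul_left_cancel h
  calc a * b * a⁻¹ = b⁻¹ * (b * (a * b)) * a⁻¹ := by group
    _ = b⁻¹ := by rw [hbab]; group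

theorem mul_inv_pow_four_eq_one {x y : G} (hxy : x ^ 2 = y ^ 2)
    (hc : Commute ((x * y⁻¹) ^ 2) y) : (x * y⁻¹) ^ 4 = 1 := by
  have hinv : (x * y⁻¹)⁻¹ = y⁻¹ * x := by
    calc (x * y⁻¹)⁻¹ = y⁻¹ * y ^ 2 * x⁻¹ := by group
      _ = y⁻¹ * x := by rw [← hxy]; group
  have hsq : (x * y⁻¹)⁻¹ ^ 2 = (x * y⁻¹) ^ 2 := by
    calc (x * y⁻¹)⁻¹ ^ 2 = y⁻¹ * ((x * y⁻¹) ^ 2 * y) := by rw [hinv]; simp only [sq]; group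
      _ = (x * y⁻¹) ^ 2 := by rw [hc.eq]; group
  rw [show 4 = 2 + 2 from rfl, pow_add]
  nth_rw 1 [← hsq]
  rw [inv_pow, inv_mul_cancel]

theorem eq_of_zpowers_eq_of_orderOf_eq_two {x y : G} (hx : orderOf x = 2)
    (hy : orderOf y = 2) (h : zpowers x = zpowers y) : x = y := by
  obtain ⟨i, rfl⟩ := mem_zpowers_iff.mp (h ▸ mem_zpowers x)
  rw [← zpow_mod_orderOf, hy] at hx ⊢
  rcases Int.emod_two_eq_zero_or_one i with hi | hi
  · simp [hi] at hx
  · simp [hi]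

theorem exists_orderOf_eq_two_ne_ne {x y : G} (hx : orderOf x = 2) (hy : orderOf y = 2)
    (hxy : x ≠ y) : ∃ w : G, orderOf w = 2 ∧ w ≠ x ∧ w ≠ y := by
  have hx2 : x * x = 1 := by rw [← sq, ← hx, pow_orderOf_eq_one]
  have hy2 : y * y = 1 := by rw [← sq, ← hy, pow_orderOf_eq_one]
  have hxinv : x⁻¹ = x := inv_eq_of_mul_eq_one_right hx2
  have hyinv : y⁻¹ = y := inv_eq_of_mul_eq_one_right hy2
  have hx1 : x ≠ 1 := by rintro rfl; simp at hx
  have hy1 : y ≠ 1 := by rintro rfl; simp at hy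
  by_cases hc : x * y = y * x
  · refine ⟨x * y, orderOf_eq_prime ?_ ?_, ?_, ?_⟩
    · rw [sq, mul_assoc, ← mul_assoc y, ← hc, mul_assoc, hy2, mul_one, hx2]
    · intro h
      exact hxy (by rw [eq_inv_of_mul_eq_one_left h, hyinv])
    · simpa using hy1
    · simpa using hx1
  · refine ⟨x * y * x, orderOf_eq_prime ?_ ?_, ?_, ?_⟩
    · calc (x * y * x) ^ 2 = x * y * (x * x) * y * x := by simp only [sq]; group
        _ = 1 := by rw [hx2, mul_one, mul_assoc x y y, hy2, mul_one, hx2]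
    · intro h
      apply hy1
      calc y = x⁻¹ * (x * y * x) * x⁻¹ := by group
        _ = 1 := by rw [h, hxinv, mul_one, hx2]
    · intro h
      apply hxy
      calc x = x⁻¹ * (x * y * x) * x⁻¹ := by rw [h, hxinv, hx2, one_mul]
        _ = y := by group
    · intro h
      apply hc
      calc x * y = x * y * x * x⁻¹ := by group
        _ = y * x := by rw [h, hxinv]

end GroupIdentities

section PrimePowerOrder

variable {G : Type*} [Group G] {p n : ℕ} [hp : Fact p.Prime]

theorem orderOf_dvd_of_not_isCyclic [Finite G] (hG : Nat.card G = p ^ (n + 1))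
    (hnc : ¬IsCyclic G) (g : G) : orderOf g ∣ p ^ n := by
  obtain ⟨k, hk, hg⟩ := (Nat.dvd_prime_pow hp.out).mp (hG ▸ orderOf_dvd_natCard g)
  rcases hk.eq_or_lt with rfl | hk
  · exact absurd (isCyclic_of_orderOf_eq_card g (hg.trans hG.symm)) hnc
  · exact hg ▸ Nat.pow_dvd_pow p (by omega)

theorem exists_mem_card_eq_of_not_isCyclic [Finite G] (hG : Nat.card G = p ^ (n + 1))
    (hnc : ¬IsCyclic G) (g : G) : ∃ M : Subgroup G, Nat.card M = p ^ n ∧ g ∈ M := by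
  obtain ⟨k, hk, hg⟩ := (Nat.dvd_prime_pow hp.out).mp (orderOf_dvd_of_not_isCyclic hG hnc g)
  obtain ⟨M, hM, hgM⟩ := Sylow.exists_subgroup_card_pow_prime_le p
    (hG ▸ pow_dvd_pow p n.le_succ) (zpowers g) (by rw [Nat.card_zpowers, hg]) hk
  exact ⟨M, hM, hgM (mem_zpowers g)⟩

theorem index_eq_of_card_eq_pow (hG : Nat.card G = p ^ (n + 1)) {M : Subgroup G}
    (hM : Nat.card M = p ^ n) : M.index = p := by
  have h := M.card_mul_index
  rw [hM, hG, pow_succ] at h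
  exact Nat.eq_of_mul_eq_mul_left (pow_pos hp.out.pos n) h

theorem ne_top_of_card_eq_pow (hG : Nat.card G = p ^ (n + 1)) {M : Subgroup G}
    (hM : Nat.card M = p ^ n) : M ≠ ⊤ := by
  rintro rfl
  rw [card_top, hG] at hM
  exact absurd (Nat.pow_right_injective hp.out.two_le hM) (by omega)

theorem two_lt_ncard_card_eq_of_not_isCyclic [Finite G] (hG : Nat.card G = p ^ (n + 1))
    (hnc : ¬IsCyclic G) : 2 < {M : Subgroup G | Nat.card M = p ^ n}.ncard := by
  obtain ⟨M₁, hM₁, -⟩ := exists_mem_card_eq_of_not_isCyclic hG hnc 1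
  obtain ⟨x, hx⟩ := SetLike.exists_not_mem_of_ne_top _ (ne_top_of_card_eq_pow hG hM₁)
  obtain ⟨M₂, hM₂, hxM₂⟩ := exists_mem_card_eq_of_not_isCyclic hG hnc x
  obtain ⟨y, hyM₁, hyM₂⟩ := exists_notMem_and_notMem_of_ne_top
    (ne_top_of_card_eq_pow hG hM₁) (ne_top_of_card_eq_pow hG hM₂)
  obtain ⟨M₃, hM₃, hyM₃⟩ := exists_mem_card_eq_of_not_isCyclic hG hnc y
  refine (Set.two_lt_ncard_iff (Set.toFinite _)).mpr ⟨M₁, M₂, M₃, hM₁, hM₂, hM₃, ?_, ?_, ?_⟩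
  · rintro rfl; exact hx hxM₂
  · rintro rfl; exact hyM₁ hyM₃
  · rintro rfl; exact hyM₂ hyM₃

theorem exists_eq_pow_of_mem_zpowers [Finite G] {g x : G} {k l : ℕ} (hg : orderOf g = p ^ k)
    (hx : x ∈ zpowers g) (hlk : l < k) (hx1 : x ^ p ^ l = 1) : ∃ t : ℕ, x = (g ^ t) ^ p := by
  obtain ⟨s, rfl⟩ := mem_powers_iff_mem_zpowers.mpr hx
  have h : p ^ l * p ∣ p ^ l * s := by
    rw [← pow_succ, mul_comm]
    exact (pow_dvd_pow p hlk).trans (hg ▸ orderOf_dvd_of_pow_eq_one (by rwa [pow_mul]))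
  obtain ⟨t, rfl⟩ := Nat.dvd_of_mul_dvd_mul_left (pow_pos hp.out.pos l) h
  exact ⟨t, by rw [← pow_mul, mul_comm]⟩

end PrimePowerOrder

section TwoGroup

variable {G : Type*} [Group G] [Finite G]

theorem isCyclic_of_forall_card_eq_isCyclic {n : ℕ} (hn : 2 ≤ n)
    (hG : Nat.card G = 2 ^ (n + 2))
    (hmax : ∀ M : Subgroup G, Nat.card M = 2 ^ (n + 1) → IsCyclic M) : IsCyclic G := by
  by_contra hnc
  have hmem := exists_mem_card_eq_of_not_isCyclic hG hnc
  have hsq_mem : ∀ {M : Subgroup G}, Nat.card M = 2 ^ (n + 1) → ∀ x : G, x ^ 2 ∈ M :=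
    fun hM => sq_mem_of_index_two (index_eq_of_card_eq_pow hG hM)
  -- `g` lies in a cyclic subgroup of index 2, and that subgroup contains every square
  have hsq_comm : ∀ x g : G, Commute (x ^ 2) g := by
    intro x g
    obtain ⟨M, hM, hgM⟩ := hmem g
    let := (hmax M hM).commGroup
    exact congrArg Subtype.val (mul_comm (⟨x ^ 2, hsq_mem hM x⟩ : M) ⟨g, hgM⟩)
  obtain ⟨M, hM, -⟩ := hmem 1
  obtain ⟨m, rfl⟩ := (M.isCyclic_iff_exists_zpowers_eq_top).mp (hmax M hM)
  obtain ⟨y, hy⟩ := SetLike.exists_not_mem_of_ne_top _ (ne_top_of_card_eq_pow hG hM)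
  obtain ⟨t, ht⟩ := exists_eq_pow_of_mem_zpowers (by rw [← Nat.card_zpowers, hM])
    (hsq_mem hM y) (Nat.lt_succ_self n)
    (by rw [← pow_mul, ← pow_succ', orderOf_dvd_iff_pow_eq_one.mp
      (orderOf_dvd_of_not_isCyclic hG hnc y)])
  have h4 : (y * (m ^ t)⁻¹) ^ 2 ^ 2 = 1 := mul_inv_pow_four_eq_one ht (hsq_comm _ _)
  -- in a cyclic group of order at least `8`, an element of order dividing `4` is a square
  obtain ⟨M', hM', hyM'⟩ := hmem (y * (m ^ t)⁻¹)
  obtain ⟨g, rfl⟩ := (M'.isCyclic_iff_exists_zpowers_eq_top).mp (hmax M' hM')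
  obtain ⟨s, hs⟩ := exists_eq_pow_of_mem_zpowers (by rw [← Nat.card_zpowers, hM']) hyM'
    (by omega) h4
  have := mul_mem (hs ▸ hsq_mem hM (g ^ s)) (pow_mem (mem_zpowers m) t)
  exact hy (by rwa [inv_mul_cancel_right] at this)

theorem exists_card_eq_not_isCyclic {n j : ℕ} (hG : Nat.card G = 2 ^ n) (hnc : ¬IsCyclic G)
    (hj : 3 ≤ j) (hjn : j ≤ n) : ∃ H : Subgroup G, Nat.card H = 2 ^ j ∧ ¬IsCyclic H := by
  induction n generalizing G with
  | zero => omega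
  | succ n ih =>
    rcases hjn.eq_or_lt with rfl | hjn
    · exact ⟨⊤, by rw [card_top, hG], fun h => hnc (topEquiv.isCyclic.mp h)⟩
    obtain ⟨M, hM, hMnc⟩ : ∃ M : Subgroup G, Nat.card M = 2 ^ n ∧ ¬IsCyclic M := by
      by_contra! h
      obtain ⟨m, rfl⟩ : ∃ m, n = m + 1 := ⟨n - 1, by omega⟩
      exact hnc (isCyclic_of_forall_card_eq_isCyclic (by omega) hG h)
    obtain ⟨H, hH, hHnc⟩ := ih hM hMnc (by omega)
    exact ⟨H.map M.subtype, (card_map_of_injective M.subtype_injective).trans hH,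
      fun h => hHnc ((H.equivMapOfInjective _ M.subtype_injective).isCyclic.mpr h)⟩

theorem two_lt_ncard_card_eq_two_pow {n k : ℕ} (hG : Nat.card G = 2 ^ n) (hnc : ¬IsCyclic G)
    (hk : 2 ≤ k) (hkn : k < n) : 2 < {H : Subgroup G | Nat.card H = 2 ^ k}.ncard := by
  obtain ⟨H, hH, hHnc⟩ := exists_card_eq_not_isCyclic hG hnc (j := k + 1) (by omega) hkn
  calc 2 < {M : Subgroup H | Nat.card M = 2 ^ k}.ncard :=
        two_lt_ncard_card_eq_of_not_isCyclic hH hHnc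
    _ ≤ {M : Subgroup G | M ≤ H ∧ Nat.card M = 2 ^ k}.ncard := ncard_card_eq_le_map_subtype H _
    _ ≤ _ := Set.ncard_le_ncard fun _ hM => hM.2

theorem exists_notMem_sq_mem_conj_mem {K : Subgroup G} {n k : ℕ} (hG : Nat.card G = 2 ^ n)
    (hK : Nat.card K = 2 ^ k) (hkn : k < n) : ∃ b ∉ K, b ^ 2 ∈ K ∧ ∀ g ∈ K, b * g * b⁻¹ ∈ K := by
  obtain ⟨L, hL, hKL⟩ := Sylow.exists_subgroup_card_pow_succ (hG ▸ pow_dvd_pow 2 hkn) hK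
  have hrel : K.relIndex L = 2 := by
    have := card_mul_relIndex hKL
    rw [hK, hL, pow_succ] at this
    exact Nat.eq_of_mul_eq_mul_left (by positivity) this
  obtain ⟨b, hbL, hb⟩ := SetLike.exists_of_lt (lt_of_le_of_ne hKL fun h => by
    rw [h, relIndex_self] at hrel
    exact absurd hrel (by norm_num))
  refine ⟨b, hb, sq b ▸ (mul_mem_iff_of_relIndex_eq_two hrel hbL hbL).mpr Iff.rfl, fun g hg => ?_⟩
  refine (mul_mem_iff_of_relIndex_eq_two hrel (mul_mem hbL (hKL hg)) (inv_mem hbL)).mpr ?_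
  exact iff_of_false (fun h => hb ((mul_mem_cancel_right hg).mp h))
    (fun h => hb (by simpa using inv_mem h))

end TwoGroup

section UniqueInvolution

variable {G : Type*} [Group G]

def IsUniqueInvolution (z : G) : Prop :=
  orderOf z = 2 ∧ ∀ x : G, orderOf x = 2 → x = z

namespace IsUniqueInvolution

variable {z : G}

theorem sq_eq_one_iff (hz : IsUniqueInvolution z) {x : G} : x ^ 2 = 1 ↔ x = 1 ∨ x = z := by
  constructor
  · intro hx
    rcases (Nat.dvd_prime Nat.prime_two).mp (orderOf_dvd_of_pow_eq_one hx) with h | h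
    · exact .inl (orderOf_eq_one_iff.mp h)
    · exact .inr (hz.2 x h)
  · rintro (rfl | rfl)
    · exact one_pow 2
    · rw [← hz.1, pow_orderOf_eq_one]

theorem ne_one (hz : IsUniqueInvolution z) : z ≠ 1 := by
  rintro rfl
  simpa using hz.1

theorem sq_self (hz : IsUniqueInvolution z) : z ^ 2 = 1 := hz.sq_eq_one_iff.mpr (.inr rfl)

theorem inv_eq (hz : IsUniqueInvolution z) : z⁻¹ = z :=
  inv_eq_of_mul_eq_one_right (by rw [← sq, hz.sq_self])

theorem conj_eq (hz : IsUniqueInvolution z) (g : G) : g * z * g⁻¹ = z := by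
  have h : (g * z * g⁻¹) ^ 2 = 1 := by rw [conj_pow, hz.sq_self, mul_one, mul_inv_cancel]
  rcases hz.sq_eq_one_iff.mp h with h | h
  · exact absurd (by simpa using h) hz.ne_one
  · exact h

theorem commute (hz : IsUniqueInvolution z) (g : G) : Commute z g :=
  (mul_inv_eq_iff_eq_mul.mp (hz.conj_eq g)).symm

theorem sq_eq (hz : IsUniqueInvolution z) {x : G} (hx : x ^ 4 = 1) (hx1 : x ≠ 1)
    (hxz : x ≠ z) : x ^ 2 = z := by
  rcases hz.sq_eq_one_iff.mp (by rw [← pow_mul]; exact hx : (x ^ 2) ^ 2 = 1) with h | h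
  · exact absurd (hz.sq_eq_one_iff.mp h) (by tauto)
  · exact h

theorem orderOf_eq_four (hz : IsUniqueInvolution z) {x : G} (hx : x ^ 2 = z) :
    orderOf x = 4 :=
  orderOf_eq_prime_pow (n := 1) (by rw [pow_one, hx]; exact hz.ne_one)
    (by rw [pow_succ, pow_mul, pow_one, hx, hz.sq_self])

theorem eq_or_eq_inv_of_commute (hz : IsUniqueInvolution z) {u v : G} (hu : u ^ 2 = z)
    (hv : v ^ 2 = z) (huv : Commute u v) : v = u ∨ v = u⁻¹ := by
  have h : (u⁻¹ * v) ^ 2 = 1 := by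
    rw [huv.inv_left.mul_pow, inv_pow, hu, hv, inv_mul_cancel]
  rcases hz.sq_eq_one_iff.mp h with h | h
  · exact .inl (inv_mul_eq_one.mp h).symm
  · have hu4 : u ^ 4 = 1 := by rw [show 4 = 2 * 2 from rfl, pow_mul, hu, hz.sq_self]
    rw [← hu, inv_mul_eq_iff_eq_mul] at h
    refine .inr ?_
    calc v = u ^ 4 * u⁻¹ := by rw [h]; group
      _ = u⁻¹ := by rw [hu4, one_mul]

/- Here `K` is a quaternion group and conjugation by `x` is an automorphism of `K` of order
dividing `2`: it inverts `u`, fixes `u` (impossible, as `x` would lie in `⟨u⟩`), or moves `u` to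
some `w ∉ ⟨u⟩` and inverts `u * w`. -/
theorem exists_conj_eq_inv (hz : IsUniqueInvolution z) {K : Subgroup G}
    (hK4 : ∀ g ∈ K, g ^ 4 = 1) (hK2 : 2 < Nat.card K) {x : G} (hx : x ∉ K)
    (hxK : ∀ g ∈ K, x * g * x⁻¹ ∈ K) (hx2 : x ^ 2 = z) :
    ∃ k ∈ K, k ≠ 1 ∧ k ≠ z ∧ x * k * x⁻¹ = k⁻¹ := by
  obtain ⟨u, huK, hu1, huz⟩ := exists_mem_ne_ne hK2 1 z
  have hu2 : u ^ 2 = z := hz.sq_eq (hK4 u huK) hu1 huz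
  set w := x * u * x⁻¹ with hw
  have hw2 : w ^ 2 = z := by rw [hw, conj_pow, hu2, hz.conj_eq]
  have hxw : x * w * x⁻¹ = u := by
    calc x * w * x⁻¹ = x ^ 2 * u * (x ^ 2)⁻¹ := by rw [hw]; simp only [sq]; group
      _ = u := by rw [hx2, (hz.commute u).eq]; group
  by_cases hwu : w = u
  · have hxu : Commute u x := (mul_inv_eq_iff_eq_mul.mp (hw ▸ hwu)).symm
    rcases hz.eq_or_eq_inv_of_commute hu2 hx2 hxu with rfl | rfl
    · exact absurd huK hx
    · exact absurd (inv_mem huK) hx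
  by_cases hwu' : w = u⁻¹
  · exact ⟨u, huK, hu1, huz, hwu'⟩
  refine ⟨u * w, mul_mem huK (hxK u huK), fun h => hwu' (eq_inv_of_mul_eq_one_right h),
    fun h => hwu ?_, ?_⟩
  · calc w = u⁻¹ * (u * w) := by group
      _ = u := by rw [h, ← hu2]; group
  · calc x * (u * w) * x⁻¹ = w * (x * w * x⁻¹) := by rw [hw]; group
      _ = w⁻¹ * (w ^ 2 * u ^ 2) * u⁻¹ := by rw [hxw]; simp only [sq]; group
      _ = (u * w)⁻¹ := by rw [hw2, hu2, ← sq, hz.sq_self]; group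

theorem exists_sq_eq_zpowers_ne (hz : IsUniqueInvolution z) {K : Subgroup G}
    (hK4 : ∀ g ∈ K, g ^ 4 = 1) (hK2 : 2 < Nat.card K) {x : G} (hx : x ∉ K)
    (hxK : ∀ g ∈ K, x * g * x⁻¹ ∈ K) (hx2 : x ^ 2 = z) :
    ∃ y ∉ K, y ^ 2 = z ∧ zpowers x ≠ zpowers y := by
  obtain ⟨k, hkK, hk1, hkz, hxk⟩ := hz.exists_conj_eq_inv hK4 hK2 hx hxK hx2
  have hy2 : (x * k) ^ 2 = z := by
    calc (x * k) ^ 2 = x * k * x⁻¹ * x ^ 2 * k := by simp only [sq]; group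
      _ = z := by rw [hxk, hx2, mul_assoc, (hz.commute k).eq]; group
  refine ⟨x * k, fun h => hx (by simpa using mul_mem h (inv_mem hkK)), hy2, fun h => ?_⟩
  have hcomm : Commute x (x * k) := by
    obtain ⟨i, hi⟩ := mem_zpowers_iff.mp (h ▸ mem_zpowers (x * k))
    exact hi ▸ (Commute.refl x).zpow_right i
  rcases hz.eq_or_eq_inv_of_commute hx2 hy2 hcomm with h' | h'
  · exact hk1 (by simpa using h')
  · apply hkz
    calc k = x⁻¹ * (x * k) := by group
      _ = (x ^ 2)⁻¹ := by rw [h']; group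
      _ = z := by rw [hx2, hz.inv_eq]

/- If `b ^ 4 ≠ 1`, then `c = b ^ 2` generates a subgroup of index `2` in the quaternion group
`K`, and `b * u` works for any `u ∈ K` outside `⟨c⟩`: conjugation by `b` fixes `⟨c⟩` pointwise,
so it maps `u` outside `⟨c⟩`, to some `u * d` with `d ∈ ⟨c⟩`; conjugating again gives
`u * d ^ 2 = c * u * c⁻¹ = u⁻¹`, hence `d ^ 2 = z` and `(b * u) ^ 2 = d * c * z ∈ {1, z}`. -/
theorem exists_notMem_sq_eq (hz : IsUniqueInvolution z) {K : Subgroup G}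
    (hK8 : Nat.card K = 8) (hK4 : ∀ g ∈ K, g ^ 4 = 1) (hzK : z ∈ K) {b : G} (hb : b ∉ K)
    (hbK : ∀ g ∈ K, b * g * b⁻¹ ∈ K) (hb2 : b ^ 2 ∈ K) :
    ∃ x ∉ K, (∀ g ∈ K, x * g * x⁻¹ ∈ K) ∧ x ^ 2 = z := by
  suffices ∃ x ∉ K, (∀ g ∈ K, x * g * x⁻¹ ∈ K) ∧ x ^ 4 = 1 by
    obtain ⟨x, hx, hxK, hx4⟩ := this
    exact ⟨x, hx, hxK, hz.sq_eq hx4 (fun h => hx (h ▸ one_mem K)) (fun h => hx (h ▸ hzK))⟩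
  by_cases hb4 : b ^ 4 = 1
  · exact ⟨b, hb, hbK, hb4⟩
  set c := b ^ 2 with hc
  have hc4 : c ^ 2 = b ^ 4 := by rw [hc, ← pow_mul]
  have hc2 : c ^ 2 = z := hz.sq_eq (hK4 c hb2) (fun h => hb4 (by rw [← hc4, h, one_pow]))
    (fun h => hb4 (by rw [← hc4, h, hz.sq_self]))
  have hcK : zpowers c ≤ K := zpowers_le.mpr hb2
  have hrel : (zpowers c).relIndex K = 2 := by
    have := card_mul_relIndex hcK
    rw [Nat.card_zpowers, hz.orderOf_eq_four hc2, hK8] at this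
    omega
  obtain ⟨u, huK, huc⟩ := SetLike.exists_of_lt (lt_of_le_of_ne hcK fun h => by
    rw [h, relIndex_self] at hrel
    exact absurd hrel (by norm_num))
  have hzc : z ∈ zpowers c := hc2 ▸ pow_mem (mem_zpowers c) 2
  have hu2 : u ^ 2 = z :=
    hz.sq_eq (hK4 u huK) (fun h => huc (h ▸ one_mem _)) (fun h => huc (h ▸ hzc))
  have hcu : c * u * c⁻¹ = u⁻¹ := by
    refine conj_eq_inv_of_mul_sq_eq_sq (hc2.symm ▸ hz.sq_eq (hK4 _ (mul_mem hb2 huK))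
      (fun h => huc ?_) (fun h => huc ?_))
    · rw [eq_inv_of_mul_eq_one_right h]
      exact inv_mem (mem_zpowers c)
    · rw [show u = c⁻¹ * z by rw [← h]; group]
      exact mul_mem (inv_mem (mem_zpowers c)) hzc
  have hbc : ∀ d ∈ zpowers c, Commute b d := by
    intro d hd
    obtain ⟨i, rfl⟩ := mem_zpowers_iff.mp hd
    exact ((Commute.refl b).pow_right 2).zpow_right i
  set w := b * u * b⁻¹ with hw
  have hwc : w ∉ zpowers c := by
    intro h
    have hu : u = w := by
      calc u = b⁻¹ * (w * b) := by rw [hw]; group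
        _ = w := by rw [← (hbc w h).eq]; group
    exact huc (hu ▸ h)
  have hdc : u⁻¹ * w ∈ zpowers c :=
    (mul_mem_iff_of_relIndex_eq_two hrel (inv_mem huK) (hbK u huK)).mpr
      (iff_of_false (fun h => huc (by simpa using inv_mem h)) hwc)
  set d := u⁻¹ * w with hd
  have hd2 : d ^ 2 = z := by
    have h : u * d ^ 2 = u⁻¹ := by
      calc u * d ^ 2 = w * (b * d * b⁻¹) := by rw [(hbc d hdc).eq, hd]; simp only [sq]; group
        _ = c * u * c⁻¹ := by rw [hd, hw, hc]; simp only [sq]; group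
        _ = u⁻¹ := hcu
    calc d ^ 2 = (u ^ 2)⁻¹ := by rw [← mul_left_cancel_iff (a := u), h]; group
      _ = z := by rw [hu2, hz.inv_eq]
  have hdc_comm : Commute d c := by
    obtain ⟨i, hi⟩ := mem_zpowers_iff.mp hdc
    rw [← hi]
    exact (Commute.refl c).zpow_left i
  have hdc_sq : (d * c) ^ 2 = 1 := by rw [hdc_comm.mul_pow, hd2, hc2, ← sq, hz.sq_self]
  have hdcu : Commute (d * c) u := by
    rcases hz.sq_eq_one_iff.mp hdc_sq with h | h <;> rw [h]
    exacts [Commute.one_left u, hz.commute u]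
  have hbu2 : (b * u) ^ 2 = d * c * z := by
    calc (b * u) ^ 2 = u * (d * c) * u := by rw [hd, hw, hc]; simp only [sq]; group
      _ = d * c * u ^ 2 := by rw [← hdcu.eq, sq, ← mul_assoc]
      _ = d * c * z := by rw [hu2]
  refine ⟨b * u, fun h => hb (by simpa using mul_mem h (inv_mem huK)), fun g hg => ?_, ?_⟩
  · convert hbK _ (mul_mem (mul_mem huK hg) (inv_mem huK)) using 1
    group
  · rw [show 4 = 2 * 2 from rfl, pow_mul, hbu2, (hz.commute _).symm.mul_pow, hdc_sq,
      hz.sq_self, one_mul]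

theorem five_le_ncard_card_eq_four [Finite G] (hz : IsUniqueInvolution z) {n : ℕ}
    (hG : Nat.card G = 2 ^ n) (hn : 4 ≤ n) (hnc : ¬IsCyclic G) :
    5 ≤ {H : Subgroup G | Nat.card H = 4}.ncard := by
  obtain ⟨K, hK8, hKnc⟩ := exists_card_eq_not_isCyclic hG hnc (j := 3) le_rfl (by omega)
  have hK4 : ∀ g ∈ K, g ^ 4 = 1 := fun g hg => by
    simpa using congrArg Subtype.val
      (orderOf_dvd_iff_pow_eq_one.mp (orderOf_dvd_of_not_isCyclic hK8 hKnc ⟨g, hg⟩))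
  have hzK : z ∈ K := by
    obtain ⟨g, hg⟩ := exists_prime_orderOf_dvd_card' (G := K) 2 (by rw [hK8]; norm_num)
    exact hz.2 g (by rwa [orderOf_coe]) ▸ g.2
  obtain ⟨b, hb, hb2, hbK⟩ := exists_notMem_sq_mem_conj_mem hG hK8 (by omega)
  obtain ⟨x, hx, hxK, hx2⟩ :=
    hz.exists_notMem_sq_eq (by rw [hK8]; norm_num) hK4 hzK hb hbK hb2
  obtain ⟨y, hy, hy2, hxy⟩ :=
    hz.exists_sq_eq_zpowers_ne hK4 (by rw [hK8]; norm_num) hx hxK hx2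
  have hinK : 3 ≤ ({H : Subgroup G | Nat.card H = 4} ∩ {H | H ≤ K}).ncard := by
    calc 3 ≤ {M : Subgroup K | Nat.card M = 2 ^ 2}.ncard :=
          two_lt_ncard_card_eq_of_not_isCyclic hK8 hKnc
      _ ≤ {M : Subgroup G | M ≤ K ∧ Nat.card M = 2 ^ 2}.ncard :=
          ncard_card_eq_le_map_subtype K _
      _ = _ := by congr 1; ext; simp [and_comm]
  have houtK : 2 ≤ ({H : Subgroup G | Nat.card H = 4} \ {H | H ≤ K}).ncard := by
    have hmem : ∀ g ∉ K, g ^ 2 = z →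
        zpowers g ∈ {H : Subgroup G | Nat.card H = 4} \ {H | H ≤ K} :=
      fun g hg hg2 => ⟨(Nat.card_zpowers g).trans (hz.orderOf_eq_four hg2),
        fun h => hg (h (mem_zpowers g))⟩
    rw [← Set.ncard_pair hxy]
    exact Set.ncard_le_ncard (Set.pair_subset (hmem x hx hx2) (hmem y hy hy2))
  rw [← Set.ncard_inter_add_ncard_sdiff_eq_ncard _ {H | H ≤ K}]
  omega

end IsUniqueInvolution

theorem six_le_ncard_card_eq_two_add_ncard_card_eq_four [Finite G] {n : ℕ}
    (hG : Nat.card G = 2 ^ n) (hn : 4 ≤ n) (hnc : ¬IsCyclic G) :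
    6 ≤ {H : Subgroup G | Nat.card H = 2}.ncard + {H : Subgroup G | Nat.card H = 4}.ncard := by
  obtain ⟨x, hx⟩ := exists_prime_orderOf_dvd_card' (G := G) 2 (hG ▸ dvd_pow_self 2 (by omega))
  by_cases hu : IsUniqueInvolution x
  · have h2 : 0 < {H : Subgroup G | Nat.card H = 2}.ncard :=
      (Set.ncard_pos (Set.toFinite _)).mpr ⟨zpowers x, (Nat.card_zpowers x).trans hx⟩
    have h4 := hu.five_le_ncard_card_eq_four hG hn hnc
    omega
  · obtain ⟨y, hy, hyx⟩ : ∃ y, orderOf y = 2 ∧ y ≠ x := by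
      simpa [IsUniqueInvolution, hx] using hu
    obtain ⟨w, hw, hwx, hwy⟩ := exists_orderOf_eq_two_ne_ne hx hy hyx.symm
    have h2 : 2 < {H : Subgroup G | Nat.card H = 2}.ncard := by
      refine (Set.two_lt_ncard_iff (Set.toFinite _)).mpr ⟨zpowers x, zpowers y, zpowers w,
        (Nat.card_zpowers x).trans hx, (Nat.card_zpowers y).trans hy,
        (Nat.card_zpowers w).trans hw, fun h => hyx ?_, fun h => hwx ?_, fun h => hwy ?_⟩
      · exact (eq_of_zpowers_eq_of_orderOf_eq_two hx hy h).symm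
      · exact (eq_of_zpowers_eq_of_orderOf_eq_two hx hw h).symm
      · exact (eq_of_zpowers_eq_of_orderOf_eq_two hy hw h).symm
    have h4 := two_lt_ncard_card_eq_two_pow hG hnc (k := 2) le_rfl (by omega)
    norm_num at h4
    omega

end UniqueInvolution

theorem two_group_subgroup_bound (G : Type*) [Group G] (a : ℕ) (ha : 4 ≤ a)
    (hcard : Nat.card G = 2 ^ a) (hnc : ¬IsCyclic G) :
    3 * a - 1 ≤ Nat.card (Subgroup G) := by
  have : Finite G := Nat.finite_of_card_ne_zero (by simp [hcard])
  set N : ℕ → ℕ := fun k => {H : Subgroup G | Nat.card H = 2 ^ k}.ncard with hN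
  have h0 : 1 ≤ N 0 := (Set.ncard_pos (Set.toFinite _)).mpr ⟨⊥, by simp⟩
  have htop : 1 ≤ N a := (Set.ncard_pos (Set.toFinite _)).mpr ⟨⊤, by simp [hcard]⟩
  have h12 : 6 ≤ N 1 + N 2 := by
    simpa [hN] using six_le_ncard_card_eq_two_add_ncard_card_eq_four hcard ha hnc
  have hmid : 3 * (a - 3) ≤ ∑ k ∈ Finset.Ico 3 a, N k := by
    simpa [mul_comm] using Finset.card_nsmul_le_sum (Finset.Ico 3 a) N 3 fun k hk =>
      two_lt_ncard_card_eq_two_pow hcard hnc (by simp at hk; omega) (by simp at hk; omega)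
  calc 3 * a - 1 ≤ N 0 + N 1 + N 2 + ∑ k ∈ Finset.Ico 3 a, N k + N a := by omega
    _ = ∑ k ∈ Finset.range (a + 1), N k := by
      rw [Finset.sum_range_succ, ← Finset.sum_range_add_sum_Ico N (by omega : 3 ≤ a)]
      simp [Finset.sum_range_succ]
    _ ≤ Nat.card (Subgroup G) := sum_ncard_card_eq_pow_le le_rfl _
end

section
/- Let G be a finite group whose order is divisible by exactly two primes p < q, and suppose a Sylow p-subgroup of G is cyclic. Then G has a unique (hence normal) Sylow q-subgroup. -/
/-!
The smallest prime dividing `|G| = p^a q^b` is `p`, so by Burnside's normal complement theorem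
the cyclic Sylow `p`-subgroup `P` has a normal complement `K`. Its order `|G : P|` is prime to `p`,
hence a power of `q`, while its index `|P|` is a power of `p`: so `K` is a normal Sylow
`q`-subgroup, and Sylow's conjugacy theorem makes it the only one.
-/

theorem Nat.minFac_prime_pow_mul_prime_pow {p q a b : ℕ} (hp : p.Prime) (hq : q.Prime)
    (hpq : p < q) (ha : a ≠ 0) : (p ^ a * q ^ b).minFac = p := by
  have hp_dvd : p ∣ p ^ a * q ^ b := (dvd_pow_self p ha).mul_right _
  have hle : (p ^ a * q ^ b).minFac ≤ p := Nat.minFac_le_of_dvd hp.two_le hp_dvd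
  have hprime : (p ^ a * q ^ b).minFac.Prime :=
    Nat.minFac_prime fun h => hp.ne_one (Nat.eq_one_of_dvd_one (h ▸ hp_dvd))
  rcases hprime.dvd_mul.mp (Nat.minFac_dvd _) with h | h
  · exact (Nat.prime_dvd_prime_iff_eq hprime hp).mp (hprime.dvd_of_dvd_pow h)
  · have := (Nat.prime_dvd_prime_iff_eq hprime hq).mp (hprime.dvd_of_dvd_pow h)
    omega

section

variable {G : Type*} [Group G] [Finite G] {p q a b : ℕ} [Fact p.Prime]

theorem Sylow.isPGroup_of_isComplement' (hcard : Nat.card G = p ^ a * q ^ b) (P : Sylow p G)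
    {K : Subgroup G} (hKP : K.IsComplement' P) : IsPGroup q K := by
  have hcoprime : (Nat.card K).Coprime (p ^ a) := by
    rw [← hKP.index_eq_card]
    exact ((Nat.Prime.coprime_iff_not_dvd Fact.out).mpr P.not_dvd_index).symm.pow_right a
  have hdvd : Nat.card K ∣ p ^ a * q ^ b := hcard ▸ K.card_subgroup_dvd_card
  exact IsPGroup.of_card_dvd_pow (hcoprime.dvd_of_dvd_mul_left hdvd)

theorem Sylow.not_dvd_index_of_isComplement' [Fact q.Prime] (hpq : p ≠ q) (P : Sylow p G)
    {K : Subgroup G} (hKP : K.IsComplement' P) : ¬ q ∣ K.index := by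
  obtain ⟨n, hn⟩ := IsPGroup.iff_card.mp P.isPGroup'
  rw [hKP.symm.index_eq_card, hn]
  intro h
  have hqp : q ∣ p := (Fact.out : q.Prime).dvd_of_dvd_pow h
  exact hpq ((Nat.prime_dvd_prime_iff_eq Fact.out Fact.out).mp hqp).symm

end

theorem Sylow.card_eq_one_of_normal {G : Type*} [Group G] [Finite G] {q : ℕ} [Fact q.Prime]
    (Q : Sylow q G) (hQ : Q.Normal) : Nat.card (Sylow q G) = 1 :=
  letI := Sylow.unique_of_normal Q hQ
  Nat.card_unique

theorem cyclic_sylow_p_implies_unique_sylow_q_general (G : Type*) [Group G] [Finite G]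
    (p q a b : ℕ) (hp : p.Prime) (hq : q.Prime) (hpq : p < q)
    (ha : 1 ≤ a) (hcard : Nat.card G = p ^ a * q ^ b)
    (P : Sylow p G) (hP : IsCyclic P) :
    Nat.card (Sylow q G) = 1 ∧ ∀ Q : Sylow q G, (Q : Subgroup G).Normal := by
  have := Fact.mk hp
  have := Fact.mk hq
  have hmin : (Nat.card G).minFac = p := by
    rw [hcard]
    exact Nat.minFac_prime_pow_mul_prime_pow hp hq hpq (by omega)
  set K := (MonoidHom.transferSylow P (hP.normalizer_le_centralizer hmin)).ker
  have hKP : K.IsComplement' P := hP.isComplement' hmin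
  have hK : K.Normal := MonoidHom.normal_ker _
  let Q₀ : Sylow q G := (Sylow.isPGroup_of_isComplement' hcard P hKP).toSylow
    (Sylow.not_dvd_index_of_isComplement' hpq.ne P hKP)
  have hQ₀ : Q₀.Normal := hK
  have hcard_one := Sylow.card_eq_one_of_normal Q₀ hQ₀
  refine ⟨hcard_one, fun Q => ?_⟩
  rwa [(Nat.card_eq_one_iff_unique.mp hcard_one).1.elim Q Q₀]

theorem cyclic_sylow_p_implies_unique_sylow_q (G : Type*) [Group G] [Finite G]
    (p q a b : ℕ) (hp : p.Prime) (hq : q.Prime) (hpq : p < q)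
    (ha : 1 ≤ a) (hb : 1 ≤ b) (hcard : Nat.card G = p ^ a * q ^ b)
    (P : Sylow p G) (hP : IsCyclic P) :
    Nat.card (Sylow q G) = 1 ∧ ∀ Q : Sylow q G, (Q : Subgroup G).Normal :=
  cyclic_sylow_p_implies_unique_sylow_q_general G p q a b hp hq hpq ha hcard P hP
end

section
/- Let G be a non-nilpotent group of order pqr for primes p < q < r, and suppose G is not isomorphic to a direct product of two nontrivial subgroups of coprime orders. Then the number of subgroups of G is at least r + 4 + min(r + 1, 2q). -/
/-!
The Sylow `r`-subgroup `R` is normal: otherwise `n_r = pq`, so `R` is self-normalizing and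
Burnside's transfer gives a normal complement of order `pq`; its Sylow `q`-subgroup is
characteristic, hence normal in `G`, and then it normalizes `R`, which is absurd.

Hence `G` has subgroups of orders `1, r, qr, pqr`, and the Sylow numbers `n_q ∈ {1, r, pr}`,
`n_p ∈ {1, q, r, qr}` supply the others: distinct Sylow subgroups are distinct subgroups, and
when `n_p = r` or `n_q = r` their normalizers are `r` distinct subgroups of order `pq`. The only
case without enough subgroups is `n_q = 1`, `n_p ∣ q`; there `r` divides `|N(P)|`, so `R`
normalizes `P`, the subgroup `PQ` is normal, and `G ≅ PQ × R` is decomposable.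
-/

open Subgroup Pointwise

theorem Nat.coprime_mul_of_primes {t a b : ℕ} (ht : t.Prime) (ha : a.Prime) (hb : b.Prime)
    (hta : t ≠ a) (htb : t ≠ b) : t.Coprime (a * b) :=
  ((Nat.coprime_primes ht ha).mpr hta).mul_right ((Nat.coprime_primes ht hb).mpr htb)

theorem Nat.eq_one_or_eq_or_eq_or_eq_mul_of_dvd_mul {a b d : ℕ} (ha : a.Prime) (hb : b.Prime)
    (h : d ∣ a * b) : d = 1 ∨ d = a ∨ d = b ∨ d = a * b := by
  obtain ⟨x, y, hx, hy, rfl⟩ := Nat.dvd_mul.mp h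
  rcases (Nat.dvd_prime ha).mp hx with rfl | rfl <;>
    rcases (Nat.dvd_prime hb).mp hy with rfl | rfl <;> simp

section Subgroups

variable {G : Type*} [Group G] [Finite G]

theorem Subgroup.card_sup_of_normal_of_coprime {H N : Subgroup G} [N.Normal]
    (h : (Nat.card H).Coprime (Nat.card N)) : Nat.card ↥(H ⊔ N) = Nat.card H * Nat.card N := by
  refine le_antisymm ?_ (Nat.le_of_dvd Nat.card_pos
    (h.mul_dvd_of_dvd_of_dvd (card_dvd_of_le le_sup_left) (card_dvd_of_le le_sup_right)))
  calc Nat.card ↥(H ⊔ N) = Nat.card ((H : Set G) * N : Set G) := by rw [← mul_normal]; rfl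
    _ ≤ Nat.card H * Nat.card N := Set.natCard_mul_le

theorem nonempty_mulEquiv_prod_of_normal {A B : Subgroup G} [hA : A.Normal] [hB : B.Normal]
    (hcop : (Nat.card A).Coprime (Nat.card B)) (hmul : Nat.card A * Nat.card B = Nat.card G) :
    Nonempty (G ≃* A × B) :=
  ⟨(MulEquiv.ofBijective (A.subtype.noncommCoprod B.subtype fun a b ↦
    commute_of_normal_of_disjoint A B hA hB (disjoint_of_coprime_natCard hcop) a b a.2 b.2)
    (isComplement'_of_coprime hmul hcop)).symm⟩

theorem card_le_card_subgroups_of_injective {α : Type*} {n : ℕ} (f : α → Subgroup G)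
    (hf : Function.Injective f) (hn : ∀ a, Nat.card (f a) = n) :
    Nat.card α ≤ Nat.card {H : Subgroup G // Nat.card H = n} :=
  Nat.card_le_card_of_injective (fun a ↦ ⟨f a, hn a⟩) fun _ _ h ↦
    hf (congrArg Subtype.val h)

theorem sum_card_subgroups_le (s : Finset ℕ) :
    ∑ n ∈ s, Nat.card {H : Subgroup G // Nat.card H = n} ≤ Nat.card (Subgroup G) := by
  rw [← Finset.sum_coe_sort, ← Nat.card_sigma]
  refine Nat.card_le_card_of_injective (fun x ↦ x.2.1) ?_
  rintro ⟨⟨n, hn⟩, H, hH⟩ ⟨⟨m, hm⟩, K, hK⟩ (rfl : H = K)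
  obtain rfl : n = m := hH.symm.trans hK
  rfl

end Subgroups

section Sylow

variable {G : Type*} [Group G] [Finite G] {t m : ℕ} [Fact t.Prime]

theorem card_sylow_eq_one_or_lt : Nat.card (Sylow t G) = 1 ∨ t < Nat.card (Sylow t G) := by
  have hmod : Nat.card (Sylow t G) % t = 1 % t := card_sylow_modEq_one t G
  have ht : 1 < t := (Fact.out : t.Prime).one_lt
  have hpos : 0 < Nat.card (Sylow t G) := Nat.card_pos
  rw [Nat.mod_eq_of_lt ht] at hmod
  by_contra! h
  rcases h.2.lt_or_eq with hlt | heq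
  · exact h.1 (by rwa [Nat.mod_eq_of_lt hlt] at hmod)
  · simp [heq] at hmod

theorem Sylow.card_eq_of_card_eq_mul (hG : Nat.card G = t * m) (hm : t.Coprime m)
    (P : Sylow t G) : Nat.card P = t := by
  have ht : t.Prime := Fact.out
  have hm0 : m ≠ 0 := by rintro rfl; exact ht.one_lt.ne' (Nat.coprime_zero_right t |>.mp hm)
  rw [P.card_eq_multiplicity, hG, Nat.factorization_mul ht.ne_zero hm0, Finsupp.add_apply,
    ht.factorization_self, Nat.factorization_eq_zero_of_not_dvd ((ht.coprime_iff_not_dvd).mp hm),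
    add_zero, pow_one]

theorem Sylow.card_dvd_of_card_eq_mul (hG : Nat.card G = t * m) (hm : t.Coprime m) :
    Nat.card (Sylow t G) ∣ m := by
  obtain ⟨P⟩ := (inferInstance : Nonempty (Sylow t G))
  have hidx := (P : Subgroup G).card_mul_index
  rw [P.card_eq_of_card_eq_mul hG hm, hG] at hidx
  rw [← Nat.eq_of_mul_eq_mul_left (Fact.out : t.Prime).pos hidx]
  exact P.card_dvd_index

theorem Sylow.normal_of_card_eq_mul_of_lt (hG : Nat.card G = t * m) (hm : m < t)
    (P : Sylow t G) : (P : Subgroup G).Normal := by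
  have hm0 : 0 < m := Nat.pos_of_mul_pos_left (hG ▸ Nat.card_pos)
  have hle := Nat.le_of_dvd hm0
    (Sylow.card_dvd_of_card_eq_mul hG (Nat.coprime_of_lt_prime hm0.ne' hm Fact.out))
  have : Subsingleton (Sylow t G) := by
    rcases card_sylow_eq_one_or_lt (G := G) (t := t) with h | h
    · exact Finite.card_le_one_iff_subsingleton.mp h.le
    · omega
  exact Sylow.normal_of_subsingleton P

theorem Sylow.card_mul_card_normalizer (P : Sylow t G) :
    Nat.card (Sylow t G) * Nat.card (normalizer ((P : Subgroup G) : Set G)) = Nat.card G := by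
  rw [P.card_eq_index_normalizer, ← P.coe_coe, index_mul_card]

theorem Sylow.normalizer_injective :
    Function.Injective fun P : Sylow t G ↦ normalizer ((P : Subgroup G) : Set G) := by
  intro P Q h
  have hP : (P : Subgroup G) ≤ normalizer ((P : Subgroup G) : Set G) := le_normalizer
  have hQ : (Q : Subgroup G) ≤ normalizer ((P : Subgroup G) : Set G) :=
    le_normalizer.trans h.symm.le
  have : ((P.subtype hP : Sylow t (normalizer ((P : Subgroup G) : Set G))) :
      Subgroup (normalizer ((P : Subgroup G) : Set G))).Normal := by
    rw [Sylow.coe_subtype]; exact normal_in_normalizer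
  have := Sylow.unique_of_normal _ this
  exact Sylow.subtype_injective (Subsingleton.elim (P.subtype hP) (Q.subtype hQ))

theorem card_sylow_le_card_subgroups (hG : Nat.card G = t * m) (hm : t.Coprime m) :
    Nat.card (Sylow t G) ≤ Nat.card {H : Subgroup G // Nat.card H = t} :=
  card_le_card_subgroups_of_injective _ (fun _ _ ↦ Sylow.ext)
    fun P ↦ P.card_eq_of_card_eq_mul hG hm

theorem card_sylow_le_card_subgroups_of_mul_eq (h : Nat.card (Sylow t G) * m = Nat.card G) :
    Nat.card (Sylow t G) ≤ Nat.card {H : Subgroup G // Nat.card H = m} := by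
  refine card_le_card_subgroups_of_injective _ Sylow.normalizer_injective fun P ↦ ?_
  have := P.card_mul_card_normalizer
  rw [← h] at this
  exact Nat.eq_of_mul_eq_mul_left Nat.card_pos this

theorem Sylow.le_of_dvd_card (R : Sylow t G) [hR : (R : Subgroup G).Normal]
    (hRt : Nat.card R = t) {K : Subgroup G} (hK : t ∣ Nat.card K) : (R : Subgroup G) ≤ K := by
  obtain ⟨g, hg⟩ := exists_prime_orderOf_dvd_card' t hK
  have hcard : Nat.card (zpowers (g : G)) = t := by rw [Nat.card_zpowers, orderOf_coe, hg]
  obtain ⟨S, hS⟩ := (IsPGroup.of_card (hcard.trans (pow_one t).symm)).exists_le_sylow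
  have := Sylow.unique_of_normal R hR
  rw [Subsingleton.elim S R] at hS
  rw [← eq_of_le_of_card_ge hS (by rw [hRt, hcard])]
  exact zpowers_le.mpr g.2

theorem exists_normal_card_eq_of_card_eq_mul {K : Subgroup G} [K.Normal]
    (hK : Nat.card K = t * m) (hm : m < t) : ∃ Q : Subgroup G, Q.Normal ∧ Nat.card Q = t := by
  obtain ⟨S⟩ := (inferInstance : Nonempty (Sylow t K))
  have : (S : Subgroup K).Characteristic :=
    Sylow.characteristic_of_normal S (S.normal_of_card_eq_mul_of_lt hK hm)
  refine ⟨(S : Subgroup K).map K.subtype, ConjAct.normal_of_characteristic_of_normal, ?_⟩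
  have hm0 : m ≠ 0 := by rintro rfl; exact Nat.card_pos.ne' (hK.trans (mul_zero t))
  rw [card_map_of_injective K.subtype_injective,
    S.card_eq_of_card_eq_mul hK (Nat.coprime_of_lt_prime hm0 hm Fact.out)]

theorem Sylow.le_normalizer_of_card_lt (R : Sylow t G) (hR : Nat.card R = t) {Q : Subgroup G}
    [Q.Normal] (hQ : Nat.card Q < t) :
    Q ≤ normalizer ((R : Subgroup G) : Set G) := by
  have hRM : (R : Subgroup G) ≤ (R : Subgroup G) ⊔ Q := le_sup_left
  have hM : Nat.card ↥((R : Subgroup G) ⊔ Q) = t * Nat.card Q := by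
    rw [card_sup_of_normal_of_coprime
      (by rw [hR]; exact Nat.coprime_of_lt_prime Nat.card_pos.ne' hQ Fact.out), hR]
  have := (R.subtype hRM).normal_of_card_eq_mul_of_lt hM hQ
  rw [Sylow.coe_subtype, normal_subgroupOf_iff_le_normalizer hRM] at this
  exact le_sup_right.trans this

end Sylow

def HasCoprimeDecomposition (G : Type*) [Group G] : Prop :=
  ∃ H K : Subgroup G, H ≠ ⊥ ∧ K ≠ ⊥ ∧ Nat.Coprime (Nat.card H) (Nat.card K) ∧
    Nonempty (G ≃* H × K)

section OrderPQR

variable {G : Type*} [Group G] [Finite G] {p q r : ℕ} [Fact p.Prime] [Fact q.Prime] [Fact r.Prime]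

theorem Sylow.normal_of_card_eq_mul_mul (hpq : p < q) (hqr : q < r)
    (hG : Nat.card G = p * q * r) (R : Sylow r G) : (R : Subgroup G).Normal := by
  have hp : p.Prime := Fact.out
  have hq : q.Prime := Fact.out
  have hr : r.Prime := Fact.out
  replace hG : Nat.card G = r * (q * p) := by rw [hG]; ring
  have hcop : r.Coprime (q * p) := Nat.coprime_mul_of_primes hr hq hp (by omega) (by omega)
  have hR := R.card_eq_of_card_eq_mul hG hcop
  have hRn := card_sylow_eq_one_or_lt (G := G) (t := r)
  rcases Nat.eq_one_or_eq_or_eq_or_eq_mul_of_dvd_mul hq hp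
    (Sylow.card_dvd_of_card_eq_mul hG hcop) with h | h | h | h
  · have := Finite.card_le_one_iff_subsingleton.mp h.le
    exact Sylow.normal_of_subsingleton R
  · have := hq.one_lt; omega
  · have := hp.one_lt; omega
  exfalso
  have hN : normalizer ((R : Subgroup G) : Set G) = R := by
    refine (eq_of_le_of_card_ge le_normalizer (le_of_eq ?_)).symm
    have := R.card_mul_card_normalizer
    rw [h, hG, mul_comm] at this
    rw [hR, Nat.eq_of_mul_eq_mul_right (Nat.mul_pos hq.pos hp.pos) this]
  have : IsMulCommutative R := by
    have := isCyclic_of_prime_card hR; exact IsCyclic.isMulCommutative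
  have hC : normalizer ((R : Subgroup G) : Set G) ≤ centralizer ((R : Subgroup G) : Set G) := by
    rw [hN]; exact le_centralizer _
  have hK := (MonoidHom.ker_transferSylow_isComplement' R hC).card_mul_card
  rw [hR, hG] at hK
  obtain ⟨Q, hQn, hQ⟩ := exists_normal_card_eq_of_card_eq_mul
    (Nat.eq_of_mul_eq_mul_right hr.pos (hK.trans (mul_comm _ _))) hpq
  have hQR := card_dvd_of_le (hN ▸ R.le_normalizer_of_card_lt hR (hQ ▸ hqr))
  rw [hQ, hR, Nat.prime_dvd_prime_iff_eq hq hr] at hQR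
  omega

theorem hasCoprimeDecomposition_of_card_sylow_dvd (hpq : p < q) (hqr : q < r)
    (hG : Nat.card G = p * q * r) (P : Sylow p G) (Q : Sylow q G) (R : Sylow r G)
    [(Q : Subgroup G).Normal] [(R : Subgroup G).Normal] (hnp : Nat.card (Sylow p G) ∣ q) :
    HasCoprimeDecomposition G := by
  have hp : p.Prime := Fact.out
  have hq : q.Prime := Fact.out
  have hr : r.Prime := Fact.out
  have hP := P.card_eq_of_card_eq_mul (m := q * r) (by rw [hG, mul_assoc])
    (Nat.coprime_mul_of_primes hp hq hr (by omega) (by omega))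
  have hQ := Q.card_eq_of_card_eq_mul (m := p * r) (by rw [hG]; ring)
    (Nat.coprime_mul_of_primes hq hp hr (by omega) (by omega))
  have hR := R.card_eq_of_card_eq_mul (m := p * q) (by rw [hG]; ring)
    (Nat.coprime_mul_of_primes hr hp hq (by omega) (by omega))
  have hrN : r ∣ Nat.card (normalizer ((P : Subgroup G) : Set G)) := by
    have hcop : r.Coprime (Nat.card (Sylow p G)) :=
      ((Nat.coprime_primes hr hq).mpr (by omega)).coprime_dvd_right hnp
    refine hcop.dvd_of_dvd_mul_left ?_
    rw [P.card_mul_card_normalizer, hG]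
    exact dvd_mul_left r (p * q)
  have hRP := R.le_of_dvd_card hR hrN
  have hA : Nat.card ↥((P : Subgroup G) ⊔ Q) = p * q := by
    rw [card_sup_of_normal_of_coprime
      (by rw [hP, hQ]; exact (Nat.coprime_primes hp hq).mpr hpq.ne), hP, hQ]
  have hcop : (p * q).Coprime r :=
    (Nat.coprime_mul_of_primes hr hp hq (by omega) (by omega)).symm
  have hAR : (Nat.card ↥((P : Subgroup G) ⊔ Q)).Coprime (Nat.card R) := by rwa [hA, hR]
  have hAn : ((P : Subgroup G) ⊔ Q).Normal := by
    rw [← normalizer_eq_top_iff, ← card_eq_iff_eq_top]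
    refine Nat.dvd_antisymm (card_subgroup_dvd_card _) (hG ▸ hcop.mul_dvd_of_dvd_of_dvd ?_ ?_)
    · exact hA ▸ card_dvd_of_le le_normalizer
    · exact hR ▸ card_dvd_of_le ((le_inf hRP le_normalizer_of_normal).trans
        (normalizer_inf_normalizer_le_normalizer_sup _ _))
  refine ⟨_, R, (one_lt_card_iff_ne_bot _).mp ?_, (one_lt_card_iff_ne_bot _).mp ?_,
    hAR, nonempty_mulEquiv_prod_of_normal hAR (by rw [hA, hR, hG])⟩
  · rw [hA]; exact Nat.one_lt_mul_iff.mpr ⟨hp.pos, hq.pos, Or.inl hp.one_lt⟩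
  · rw [hR]; exact hr.one_lt

theorem add_four_le_card_subgroup (hpq : p < q) (hqr : q < r) (hG : Nat.card G = p * q * r) :
    Nat.card {H : Subgroup G // Nat.card H = p} + Nat.card {H : Subgroup G // Nat.card H = q} +
      Nat.card {H : Subgroup G // Nat.card H = p * q} + 4 ≤ Nat.card (Subgroup G) := by
  have hp : p.Prime := Fact.out
  have hq : q.Prime := Fact.out
  have hr : r.Prime := Fact.out
  obtain ⟨Q⟩ := (inferInstance : Nonempty (Sylow q G))
  obtain ⟨R⟩ := (inferInstance : Nonempty (Sylow r G))
  have : (R : Subgroup G).Normal := R.normal_of_card_eq_mul_mul hpq hqr hG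
  have hQ := Q.card_eq_of_card_eq_mul (m := p * r) (by rw [hG]; ring)
    (Nat.coprime_mul_of_primes hq hp hr (by omega) (by omega))
  have hR := R.card_eq_of_card_eq_mul (m := p * q) (by rw [hG]; ring)
    (Nat.coprime_mul_of_primes hr hp hq (by omega) (by omega))
  have hQR : Nat.card ↥((Q : Subgroup G) ⊔ R) = q * r := by
    rw [card_sup_of_normal_of_coprime
      (by rw [hQ, hR]; exact (Nat.coprime_primes hq hr).mpr hqr.ne), hQ, hR]
  have hpqr : p * q ≠ r := fun h ↦ Nat.not_prime_mul hp.one_lt.ne' hq.one_lt.ne' (h ▸ hr)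
  have : q < p * q := by nlinarith [hp.two_le]
  have : p * q < q * r := by nlinarith
  have : r < q * r := by nlinarith [hq.two_le]
  have : q * r < p * q * r := by nlinarith [hp.two_le, hq.two_le, hr.two_le]
  have hnodup : [1, p, q, r, p * q, q * r, p * q * r].Nodup := by
    simp only [List.nodup_cons, List.mem_cons, List.not_mem_nil, List.nodup_nil, or_false,
      not_false_eq_true, and_true]
    have := hp.one_lt
    omega
  have hsum := sum_card_subgroups_le (G := G) [1, p, q, r, p * q, q * r, p * q * r].toFinset
  rw [List.sum_toFinset _ hnodup] at hsum
  simp only [List.map_cons, List.map_nil, List.sum_cons, List.sum_nil] at hsum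
  have hpos {n : ℕ} (H : Subgroup G) (hH : Nat.card H = n) :
      0 < Nat.card {H : Subgroup G // Nat.card H = n} :=
    have : Nonempty {H : Subgroup G // Nat.card H = n} := ⟨⟨H, hH⟩⟩
    Nat.card_pos
  have := hpos ⊥ card_bot
  have := hpos _ hR
  have := hpos _ hQR
  have := hpos ⊤ (card_top.trans hG)
  omega

theorem add_min_le_card_subgroups (hpq : p < q) (hqr : q < r) (hG : Nat.card G = p * q * r)
    (hindec : ¬HasCoprimeDecomposition G) :
    r + min (r + 1) (2 * q) ≤ Nat.card {H : Subgroup G // Nat.card H = p} +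
      Nat.card {H : Subgroup G // Nat.card H = q} +
      Nat.card {H : Subgroup G // Nat.card H = p * q} := by
  have hp : p.Prime := Fact.out
  have hq : q.Prime := Fact.out
  have hr : r.Prime := Fact.out
  have hGp : Nat.card G = p * (q * r) := by rw [hG, mul_assoc]
  have hGq : Nat.card G = q * (p * r) := by rw [hG]; ring
  have hcp := Nat.coprime_mul_of_primes hp hq hr (by omega) (by omega)
  have hcq := Nat.coprime_mul_of_primes hq hp hr (by omega) (by omega)
  have hNp := card_sylow_le_card_subgroups (G := G) hGp hcp
  have hNq := card_sylow_le_card_subgroups (G := G) hGq hcq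
  have hNpq {t : ℕ} [Fact t.Prime] (ht : Nat.card (Sylow t G) = r) :
      r ≤ Nat.card {H : Subgroup G // Nat.card H = p * q} :=
    ht ▸ card_sylow_le_card_subgroups_of_mul_eq (by rw [ht, hG, mul_comm])
  have : 0 < Nat.card (Sylow p G) := Nat.card_pos
  have : 0 < Nat.card (Sylow q G) := Nat.card_pos
  have := min_le_left (r + 1) (2 * q)
  have := min_le_right (r + 1) (2 * q)
  obtain ⟨P⟩ := (inferInstance : Nonempty (Sylow p G))
  obtain ⟨Q⟩ := (inferInstance : Nonempty (Sylow q G))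
  obtain ⟨R⟩ := (inferInstance : Nonempty (Sylow r G))
  have : (R : Subgroup G).Normal := R.normal_of_card_eq_mul_mul hpq hqr hG
  rcases Nat.eq_one_or_eq_or_eq_or_eq_mul_of_dvd_mul hp hr
    (Sylow.card_dvd_of_card_eq_mul hGq hcq) with hnq | hnq | hnq | hnq
  · have := Finite.card_le_one_iff_subsingleton.mp hnq.le
    have : (Q : Subgroup G).Normal := Sylow.normal_of_subsingleton Q
    rcases Nat.eq_one_or_eq_or_eq_or_eq_mul_of_dvd_mul hq hr
      (Sylow.card_dvd_of_card_eq_mul hGp hcp) with hnp | hnp | hnp | hnp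
    · exact absurd (hasCoprimeDecomposition_of_card_sylow_dvd hpq hqr hG P Q R
        (hnp ▸ one_dvd q)) hindec
    · exact absurd (hasCoprimeDecomposition_of_card_sylow_dvd hpq hqr hG P Q R
        (hnp ▸ dvd_refl q)) hindec
    · have := hNpq hnp
      omega
    · have : r + 2 * q ≤ q * r + 1 := by nlinarith [hp.two_le, hr.two_le]
      omega
  · have := card_sylow_eq_one_or_lt (G := G) (t := q)
    have := hp.one_lt
    omega
  · have := hNpq hnq
    omega
  · have : 2 * r ≤ p * r := Nat.mul_le_mul_right r hp.two_le
    omega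

end OrderPQR

theorem pqr_nonnilpotent_subgroup_bound_general (G : Type*) [Group G] (p q r : ℕ)
    (hp : p.Prime) (hq : q.Prime) (hr : r.Prime) (hpq : p < q) (hqr : q < r)
    (hcard : Nat.card G = p * q * r)
    (hindec : ¬∃ (H K : Subgroup G), H ≠ ⊥ ∧ K ≠ ⊥ ∧
      Nat.Coprime (Nat.card H) (Nat.card K) ∧ Nonempty (G ≃* H × K)) :
    r + 4 + min (r + 1) (2 * q) ≤ Nat.card (Subgroup G) := by
  have := Fact.mk hp
  have := Fact.mk hq
  have := Fact.mk hr
  have : Finite G :=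
    Nat.finite_of_card_ne_zero (hcard ▸ (Nat.mul_pos (Nat.mul_pos hp.pos hq.pos) hr.pos).ne')
  have := add_four_le_card_subgroup (G := G) hpq hqr hcard
  have := add_min_le_card_subgroups hpq hqr hcard hindec
  omega

theorem pqr_nonnilpotent_subgroup_bound (G : Type*) [Group G] (p q r : ℕ)
    (hp : p.Prime) (hq : q.Prime) (hr : r.Prime) (hpq : p < q) (hqr : q < r)
    (hcard : Nat.card G = p * q * r) (hnn : ¬Group.IsNilpotent G)
    (hindec : ¬∃ (H K : Subgroup G), H ≠ ⊥ ∧ K ≠ ⊥ ∧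
      Nat.Coprime (Nat.card H) (Nat.card K) ∧ Nonempty (G ≃* H × K)) :
    r + 4 + min (r + 1) (2 * q) ≤ Nat.card (Subgroup G) :=
  pqr_nonnilpotent_subgroup_bound_general G p q r hp hq hr hpq hqr hcard hindec
end
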